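/- arXiv:1201.4826 — 13 statements merged into one kernel-verified Lean document; each statement's English description precedes it below -/
import Mathlib

section
/- If ξ and η are nonincreasing nonnegative real sequences converging to 0 with ξ majorized by η (i.e., ∑_{j=1}^n ξ_j ≤ ∑_{j=1}^n η_j for all n), then the following are equivalent: (i) there exists a strictly increasing sequence of integers n_k starting at n_0 = 0 such that the tail sequence ξ^{(n_k)} is majorized by η^{(n_k)} for each k; (ii) for every m, the set {∑_{j=1}^n (η_j − ξ_j) : n ≥ m} attains a minimum. -/
open Finset Filter Topology

theorem stmt0 (ξ η : ℕ → ℝ)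
    (hξa : Antitone ξ) (hξ0 : ∀ n, 0 ≤ ξ n) (hξl : Tendsto ξ atTop (nhds 0))
    (hηa : Antitone η) (hη0 : ∀ n, 0 ≤ η n) (hηl : Tendsto η atTop (nhds 0))
    (hmaj : ∀ n, ∑ j ∈ Finset.range n, ξ j ≤ ∑ j ∈ Finset.range n, η j) :
    (∃ nk : ℕ → ℕ, nk 0 = 0 ∧ StrictMono nk ∧
        ∀ k m, ∑ j ∈ Finset.range m, ξ (nk k + j) ≤ ∑ j ∈ Finset.range m, η (nk k + j)) ↔
    (∀ m, ∃ n, m ≤ n ∧ ∀ n', m ≤ n' →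
        ∑ j ∈ Finset.range n, (η j - ξ j) ≤ ∑ j ∈ Finset.range n', (η j - ξ j)) := by
  set S : ℕ → ℝ := fun n => ∑ j ∈ Finset.range n, (η j - ξ j) with hS
  have key : ∀ n m, (∑ j ∈ Finset.range m, ξ (n + j) ≤ ∑ j ∈ Finset.range m, η (n + j)) ↔
      S n ≤ S (n + m) := by
    intro n m
    have h1 : S (n + m) = S n + ∑ j ∈ Finset.range m, (η (n + j) - ξ (n + j)) := by
      simp [hS, Finset.sum_range_add, Finset.sum_sub_distrib]; ring
    rw [h1, Finset.sum_sub_distrib]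
    constructor <;> intro h <;> linarith
  constructor
  · rintro ⟨nk, hnk0, hmono, hk⟩ m
    have hkm : m ≤ nk m := hmono.le_apply
    obtain ⟨n₀, hn₀mem, hn₀min⟩ :=
      Finset.exists_min_image (Finset.Icc m (nk m)) S ⟨m, by simp [hkm]⟩
    rw [Finset.mem_Icc] at hn₀mem
    refine ⟨n₀, hn₀mem.1, ?_⟩
    intro n' hn'
    by_cases hc : n' ≤ nk m
    · exact hn₀min n' (Finset.mem_Icc.2 ⟨hn', hc⟩)
    · have h1 : S n₀ ≤ S (nk m) := hn₀min (nk m) (Finset.mem_Icc.2 ⟨hkm, le_refl _⟩)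
      have h2 : S (nk m) ≤ S (nk m + (n' - nk m)) := (key _ _).1 (hk m (n' - nk m))
      have h3 : nk m + (n' - nk m) = n' := by omega
      rw [h3] at h2
      linarith
  · intro h
    choose f hf1 hf2 using fun m => h (m + 1)
    set nk : ℕ → ℕ := fun k => Nat.rec 0 (fun _ prev => f prev) k with hnk
    have hsucc : ∀ k, nk (k + 1) = f (nk k) := fun k => rfl
    refine ⟨nk, rfl, ?_, ?_⟩
    · apply strictMono_nat_of_lt_succ
      intro k
      have := hf1 (nk k)
      rw [hsucc]
      omega
    · intro k m
      rw [key]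
      cases k with
      | zero =>
        have h0 : nk 0 = 0 := rfl
        rw [h0]
        have := hmaj m
        simp only [hS, zero_add]
        rw [Finset.sum_sub_distrib]
        simp
        linarith
      | succ k =>
        rw [hsucc]
        apply hf2 (nk k)
        have := hf1 (nk k)
        omega
end

section
/- If ξ and η are nonincreasing nonnegative real sequences converging to 0 with ξ ≺ η, and for every m the set {∑_{j=1}^n (η_j − ξ_j) : n ≥ m} attains a minimum, then there exists a nonincreasing nonnegative sequence ρ converging to 0 with ξ ≤ ρ pointwise and ρ block-majorized by η (i.e., ρ ≺ η and ∑_{j=1}^{n_k} ρ_j = ∑_{j=1}^{n_k} η_j for some strictly increasing sequence of integers n_k → ∞). -/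
open Finset Filter Topology

theorem stmt1 (ξ η : ℕ → ℝ)
    (hξa : Antitone ξ) (hξ0 : ∀ n, 0 ≤ ξ n) (hξl : Tendsto ξ atTop (nhds 0))
    (hηa : Antitone η) (hη0 : ∀ n, 0 ≤ η n) (hηl : Tendsto η atTop (nhds 0))
    (hmaj : ∀ n, ∑ j ∈ Finset.range n, ξ j ≤ ∑ j ∈ Finset.range n, η j)
    (hmin : ∀ m, ∃ n, m ≤ n ∧ ∀ n', m ≤ n' →
        ∑ j ∈ Finset.range n, (η j - ξ j) ≤ ∑ j ∈ Finset.range n', (η j - ξ j)) :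
    ∃ ρ : ℕ → ℝ, Antitone ρ ∧ (∀ n, 0 ≤ ρ n) ∧ Tendsto ρ atTop (nhds 0) ∧
      (∀ i, ξ i ≤ ρ i) ∧
      (∀ n, ∑ j ∈ Finset.range n, ρ j ≤ ∑ j ∈ Finset.range n, η j) ∧
      ∃ nk : ℕ → ℕ, StrictMono nk ∧
        ∀ k, ∑ j ∈ Finset.range (nk k), ρ j = ∑ j ∈ Finset.range (nk k), η j := by
  classical
  set D : ℕ → ℝ := fun n => ∑ j ∈ Finset.range n, (η j - ξ j) with hDdef
  choose g hg1 hg2 using hmin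
  set m : ℕ → ℕ := fun k => Nat.rec 0 (fun _ prev => g (prev + 1)) k with hmdef
  have hm0 : m 0 = 0 := rfl
  have hms : ∀ k, m (k+1) = g (m k + 1) := fun k => rfl
  have hlt : ∀ k, m k < m (k+1) := by
    intro k
    have := hg1 (m k + 1)
    rw [hms k]; omega
  have hmstrict : StrictMono m := strictMono_nat_of_lt_succ hlt
  have hDmin : ∀ k n, m k + 1 ≤ n → D (m (k+1)) ≤ D n := by
    intro k n hn
    rw [hms k]
    exact hg2 (m k + 1) n hn
  have hDnonneg : ∀ n, 0 ≤ D n := by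
    intro n
    have := hmaj n
    simp only [hDdef, Finset.sum_sub_distrib]
    linarith
  have hDdiff : ∀ a b, a ≤ b → D b - D a = ∑ j ∈ Finset.Ico a b, (η j - ξ j) := by
    intro a b hab
    rw [hDdef]
    rw [Finset.sum_Ico_eq_sub _ hab]
  have hDm : ∀ k, D (m k) ≤ D (m (k+1)) := by
    intro k
    cases k with
    | zero => rw [hm0]; simpa [hDdef] using hDnonneg (m 1)
    | succ k' =>
      exact hDmin k' (m (k'+1+1)) (by have h1 := hlt k'; have h2 := hlt (k'+1); omega)
  -- block sums
  have hblockξη : ∀ k, ∑ j ∈ Finset.Ico (m k) (m (k+1)), ξ j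
      ≤ ∑ j ∈ Finset.Ico (m k) (m (k+1)), η j := by
    intro k
    have h1 := hDm k
    have h2 := hDdiff (m k) (m (k+1)) (hlt k).le
    rw [Finset.sum_sub_distrib] at h2
    linarith
  have tailmin : ∀ k n, m k + 1 ≤ n → n ≤ m (k+1) →
      ∑ j ∈ Finset.Ico n (m (k+1)), η j ≤ ∑ j ∈ Finset.Ico n (m (k+1)), ξ j := by
    intro k n h1 h2
    have h3 := hDmin k n h1
    have h4 := hDdiff n (m (k+1)) h2
    rw [Finset.sum_sub_distrib] at h4
    linarith
  set S : ℕ → ℝ := fun k => ∑ j ∈ Finset.Ico (m k) (m (k+1)), η j with hSdef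
  have hS0 : ∀ k, 0 ≤ S k := fun k => Finset.sum_nonneg (fun j _ => hη0 j)
  -- water level
  have hc : ∀ k, ∃ c, 0 ≤ c ∧ (∑ j ∈ Finset.Ico (m k) (m (k+1)), max (ξ j) c) = S k := by
    intro k
    set f : ℝ → ℝ := fun c => ∑ j ∈ Finset.Ico (m k) (m (k+1)), max (ξ j) c with hfdef
    have hcont : Continuous f := by
      apply continuous_finset_sum
      intro j _
      exact continuous_const.max continuous_id
    have hf0 : f 0 ≤ S k := by
      have : f 0 = ∑ j ∈ Finset.Ico (m k) (m (k+1)), ξ j := by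
        apply Finset.sum_congr rfl
        intro j _
        exact max_eq_left (hξ0 j)
      rw [this]; exact hblockξη k
    have hfS : S k ≤ f (S k) := by
      have h1 : ∑ j ∈ Finset.Ico (m k) (m (k+1)), S k ≤ f (S k) :=
        Finset.sum_le_sum (fun j _ => le_max_right _ _)
      rw [Finset.sum_const, nsmul_eq_mul] at h1
      have hcard : (1 : ℝ) ≤ (Finset.Ico (m k) (m (k+1))).card := by
        rw [Nat.card_Ico]
        have := hlt k
        exact_mod_cast by omega
      nlinarith [hS0 k]
    have := intermediate_value_Icc (hS0 k) hcont.continuousOn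
    have hmem : S k ∈ Set.Icc (f 0) (f (S k)) := ⟨hf0, hfS⟩
    obtain ⟨c, hc1, hc2⟩ := this hmem
    exact ⟨c, hc1.1, hc2⟩
  choose c hc0 hcsum using hc
  -- block index
  set blk : ℕ → ℕ := fun j => Nat.findGreatest (fun k => m k ≤ j) j with hblkdef
  have hblk1 : ∀ j, m (blk j) ≤ j := by
    intro j
    exact Nat.findGreatest_spec (P := fun k => m k ≤ j) (Nat.zero_le j)
      (by exact Nat.zero_le j)
  have hblk2 : ∀ j, j < m (blk j + 1) := by
    intro j
    by_contra h
    push_neg at h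
    have h2 : blk j + 1 ≤ j := le_trans (hmstrict.le_apply) h
    exact Nat.findGreatest_is_greatest (Nat.lt_succ_self _) h2 h
  have hblk_eq : ∀ k j, m k ≤ j → j < m (k+1) → blk j = k := by
    intro k j h1 h2
    rcases lt_trichotomy (blk j) k with h | h | h
    · exfalso
      have : m (blk j + 1) ≤ m k := hmstrict.monotone (show blk j + 1 ≤ k by omega)
      have := hblk2 j
      omega
    · exact h
    · exfalso
      have : m (k + 1) ≤ m (blk j) := hmstrict.monotone (show k + 1 ≤ blk j by omega)
      have := hblk1 j
      omega
  set ρ : ℕ → ℝ := fun j => max (ξ j) (c (blk j)) with hρdef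
  have hρξ : ∀ j, ξ j ≤ ρ j := fun j => le_max_left _ _
  have hρ0 : ∀ j, 0 ≤ ρ j := fun j => le_trans (hξ0 j) (hρξ j)
  have hρblock : ∀ k j, m k ≤ j → j < m (k+1) → ρ j = max (ξ j) (c k) := by
    intro k j h1 h2
    rw [hρdef]
    simp only
    rw [hblk_eq k j h1 h2]
  have hsumρ : ∀ k, ∑ j ∈ Finset.Ico (m k) (m (k+1)), ρ j = S k := by
    intro k
    rw [← hcsum k]
    apply Finset.sum_congr rfl
    intro j hj
    rw [Finset.mem_Ico] at hj
    exact hρblock k j hj.1 hj.2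
  -- c k ≤ η (m k)
  have hcη : ∀ k, c k ≤ η (m k) := by
    intro k
    have h1 : ∑ j ∈ Finset.Ico (m k) (m (k+1)), c k
        ≤ ∑ j ∈ Finset.Ico (m k) (m (k+1)), max (ξ j) (c k) :=
      Finset.sum_le_sum (fun j _ => le_max_right _ _)
    rw [hcsum k] at h1
    have h2 : S k ≤ ∑ j ∈ Finset.Ico (m k) (m (k+1)), η (m k) := by
      apply Finset.sum_le_sum
      intro j hj
      rw [Finset.mem_Ico] at hj
      exact hηa hj.1
    rw [Finset.sum_const, nsmul_eq_mul] at h1 h2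
    have hcard : (0 : ℝ) < (Finset.Ico (m k) (m (k+1))).card := by
      rw [Nat.card_Ico]
      have := hlt k
      exact_mod_cast by omega
    have := le_trans h1 h2
    exact le_of_mul_le_mul_left this hcard
  -- key boundary lemma
  have hlast : ∀ k, η (m (k+1)) ≤ ρ (m (k+1) - 1) := by
    intro k
    set b := m (k+1) with hbdef
    set q := η b with hqdef
    have hb : m k < b := hlt k
    have hlastmem : m k ≤ b - 1 ∧ b - 1 < b := by omega
    by_contra hcon
    push_neg at hcon
    rw [hρblock k (b-1) hlastmem.1 hlastmem.2] at hcon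
    have hξlt : ξ (b-1) < q := lt_of_le_of_lt (le_max_left _ _) hcon
    have hclt : c k < q := lt_of_le_of_lt (le_max_right _ _) hcon
    have hex : ∃ j, m k ≤ j ∧ ξ j < q := ⟨b - 1, hlastmem.1, hξlt⟩
    set t := Nat.find hex with htdef
    have ht : m k ≤ t ∧ ξ t < q := Nat.find_spec hex
    have htle : t ≤ b - 1 := Nat.find_le ⟨hlastmem.1, hξlt⟩
    have htb : t < b := by omega
    -- strict inequality on the tail
    have hA : ∑ j ∈ Finset.Ico t b, ρ j < ∑ j ∈ Finset.Ico t b, η j := by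
      apply Finset.sum_lt_sum_of_nonempty
      · rw [Finset.nonempty_Ico]; exact htb
      · intro j hj
        rw [Finset.mem_Ico] at hj
        have hjq : ρ j < q := by
          rw [hρblock k j (le_trans ht.1 hj.1) hj.2]
          exact max_lt (lt_of_le_of_lt (hξa hj.1) ht.2) hclt
        have : q ≤ η j := hηa hj.2.le
        linarith
    have hB : ∑ j ∈ Finset.Ico t b, η j ≤ ∑ j ∈ Finset.Ico t b, ρ j := by
      rcases eq_or_lt_of_le ht.1 with heq | hgt
      · rw [← heq, hbdef]
        exact le_of_eq (hsumρ k).symm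
      · calc ∑ j ∈ Finset.Ico t b, η j ≤ ∑ j ∈ Finset.Ico t b, ξ j :=
              tailmin k t (by omega) htb.le
          _ ≤ ∑ j ∈ Finset.Ico t b, ρ j := Finset.sum_le_sum (fun j _ => hρξ j)
    linarith
  -- antitone
  have hstep : ∀ j, ρ (j+1) ≤ ρ j := by
    intro j
    have h1 := hblk1 j
    have h2 := hblk2 j
    set k := blk j with hk
    by_cases hcase : j + 1 < m (k+1)
    · rw [hρblock k (j+1) (by omega) hcase, hρblock k j h1 h2]
      exact max_le_max (hξa (Nat.le_succ j)) le_rfl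
    · have hj1 : j + 1 = m (k+1) := by omega
      have hjeq : j = m (k+1) - 1 := by omega
      have hρj : η (m (k+1)) ≤ ρ j := by rw [hjeq]; exact hlast k
      rw [hρblock (k+1) (j+1) (by omega) (by have := hlt (k+1); omega)]
      apply max_le
      · exact le_trans (hξa (Nat.le_succ j)) (hρξ j)
      · exact le_trans (hcη (k+1)) hρj
  have hρa : Antitone ρ := antitone_nat_of_succ_le hstep
  -- equality at m k
  have hE : ∀ k, ∑ j ∈ Finset.range (m k), ρ j = ∑ j ∈ Finset.range (m k), η j := by
    intro k
    induction k with
    | zero => rw [hm0]; simp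
    | succ k ih =>
      rw [Finset.range_eq_Ico, ← Finset.sum_Ico_consecutive _ (Nat.zero_le (m k)) (hlt k).le,
        ← Finset.sum_Ico_consecutive (fun j => η j) (Nat.zero_le (m k)) (hlt k).le,
        ← Finset.range_eq_Ico]
      rw [ih, hsumρ k]
  -- majorization
  have hρη : ∀ n, ∑ j ∈ Finset.range n, ρ j ≤ ∑ j ∈ Finset.range n, η j := by
    intro n
    have h1 := hblk1 n
    have h2 := hblk2 n
    set k := blk n with hk
    set b := m (k+1) with hbdef
    have htail : ∑ j ∈ Finset.Ico n b, η j ≤ ∑ j ∈ Finset.Ico n b, ρ j := by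
      rcases eq_or_lt_of_le h1 with heq | hgt
      · rw [← heq, hbdef]
        exact le_of_eq (hsumρ k).symm
      · calc ∑ j ∈ Finset.Ico n b, η j ≤ ∑ j ∈ Finset.Ico n b, ξ j :=
              tailmin k n (by omega) h2.le
          _ ≤ ∑ j ∈ Finset.Ico n b, ρ j := Finset.sum_le_sum (fun j _ => hρξ j)
    have hsplitρ : ∑ j ∈ Finset.Ico n b, ρ j
        = ∑ j ∈ Finset.range b, ρ j - ∑ j ∈ Finset.range n, ρ j :=
      Finset.sum_Ico_eq_sub _ h2.le
    have hsplitη : ∑ j ∈ Finset.Ico n b, η j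
        = ∑ j ∈ Finset.range b, η j - ∑ j ∈ Finset.range n, η j :=
      Finset.sum_Ico_eq_sub _ h2.le
    have hEb := hE (k+1)
    rw [← hbdef] at hEb
    linarith
  -- tendsto
  have hbdd : BddBelow (Set.range ρ) := ⟨0, by rintro x ⟨j, rfl⟩; exact hρ0 j⟩
  have htend : Tendsto ρ atTop (𝓝 (⨅ i, ρ i)) := tendsto_atTop_ciInf hρa hbdd
  have hmtop : Tendsto m atTop atTop := hmstrict.tendsto_atTop
  have hcomp : Tendsto (fun k => ρ (m k)) atTop (𝓝 (⨅ i, ρ i)) := htend.comp hmtop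
  have hsq : Tendsto (fun k => ρ (m k)) atTop (𝓝 0) := by
    have hub : ∀ k, ρ (m k) ≤ ξ (m k) + η (m k) := by
      intro k
      rw [hρblock k (m k) le_rfl (hlt k)]
      apply max_le
      · linarith [hη0 (m k)]
      · linarith [hcη k, hξ0 (m k)]
    have hlim : Tendsto (fun k => ξ (m k) + η (m k)) atTop (𝓝 0) := by
      have := (hξl.comp hmtop).add (hηl.comp hmtop)
      simpa using this
    exact squeeze_zero (fun k => hρ0 (m k)) hub hlim
  have hinf : (⨅ i, ρ i) = 0 := tendsto_nhds_unique hcomp hsq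
  rw [hinf] at htend
  exact ⟨ρ, hρa, hρ0, htend, hρξ, hρη, m, hmstrict, hE⟩
end

section
/- If ξ and η are nonincreasing nonnegative real sequences converging to 0 with ξ ≺ η, then there exists a nonincreasing nonnegative sequence ζ converging to 0 such that ξ ≼ ζ (strong majorization) and ζ ≤ η pointwise. -/
open Finset Filter Topology

theorem stmt4 (ξ η : ℕ → ℝ)
    (hξa : Antitone ξ) (hξ0 : ∀ n, 0 ≤ ξ n) (hξl : Tendsto ξ atTop (nhds 0))
    (hηa : Antitone η) (hη0 : ∀ n, 0 ≤ η n) (hηl : Tendsto η atTop (nhds 0))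
    (hmaj : ∀ n, ∑ j ∈ Finset.range n, ξ j ≤ ∑ j ∈ Finset.range n, η j) :
    ∃ ζ : ℕ → ℝ, Antitone ζ ∧ (∀ n, 0 ≤ ζ n) ∧ Tendsto ζ atTop (nhds 0) ∧
      (∀ n, ∑ j ∈ Finset.range n, ξ j ≤ ∑ j ∈ Finset.range n, ζ j) ∧
      Filter.liminf (fun n => ∑ j ∈ Finset.range n, (ζ j - ξ j)) atTop = 0 ∧
      (∀ n, ζ n ≤ η n) := by
  set X : ℕ → ℝ := fun n => ∑ j ∈ Finset.range n, ξ j with hXdef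
  set H : ℕ → ℝ := fun n => ∑ j ∈ Finset.range n, η j with hHdef
  have hXs : ∀ n, X (n+1) = X n + ξ n := fun n => Finset.sum_range_succ ξ n
  have hHs : ∀ n, H (n+1) = H n + η n := fun n => Finset.sum_range_succ η n
  have hX0 : X 0 = 0 := Finset.sum_range_zero ξ
  have hH0 : H 0 = 0 := Finset.sum_range_zero η
  have hXmono : Monotone X := monotone_nat_of_le_succ fun n => by rw [hXs]; linarith [hξ0 n]
  set F : Set (ℕ → ℝ) := {W | (∀ n, X n ≤ W n) ∧ W 0 = 0 ∧ (∀ n, W n ≤ W (n+1)) ∧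
    (∀ n, W (n+1) ≤ W n + η n) ∧ ∀ n, W n + W (n+2) ≤ 2 * W (n+1)} with hFdef
  have hHF : H ∈ F := ⟨hmaj, hH0, fun n => by rw [hHs]; linarith [hη0 n],
    fun n => (hHs n).le,
    fun n => by rw [hHs (n+1), hHs n]; have := hηa (Nat.le_succ n); linarith⟩
  set Z : ℕ → ℝ := fun n => sInf ((fun W => W n) '' F) with hZdef
  have hbdd : ∀ n, BddBelow ((fun W => W n) '' F) :=
    fun n => ⟨X n, by rintro x ⟨W, hW, rfl⟩; exact hW.1 n⟩
  have hZle : ∀ (W) (_ : W ∈ F) (n : ℕ), Z n ≤ W n :=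
    fun W hW n => csInf_le (hbdd n) ⟨W, hW, rfl⟩
  have hXZ : ∀ n, X n ≤ Z n :=
    fun n => le_csInf ⟨H n, H, hHF, rfl⟩ (by rintro x ⟨W, hW, rfl⟩; exact hW.1 n)
  have hZ0 : Z 0 = 0 := le_antisymm (by simpa [hH0] using hZle H hHF 0)
    (by simpa [hX0] using hXZ 0)
  have hZmono : ∀ n, Z n ≤ Z (n+1) := fun n =>
    le_csInf ⟨H (n+1), H, hHF, rfl⟩
      (by rintro x ⟨W, hW, rfl⟩; exact le_trans (hZle W hW n) (hW.2.2.1 n))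
  have hZcap : ∀ n, Z (n+1) ≤ Z n + η n := by
    intro n
    have h : Z (n+1) - η n ≤ Z n := le_csInf ⟨H n, H, hHF, rfl⟩ (by
      rintro x ⟨W, hW, rfl⟩
      have h1 := hZle W hW (n+1); have h2 := hW.2.2.2.1 n; linarith)
    linarith
  have hZconc : ∀ n, Z n + Z (n+2) ≤ 2 * Z (n+1) := by
    intro n
    have h : (Z n + Z (n+2)) / 2 ≤ Z (n+1) := le_csInf ⟨H (n+1), H, hHF, rfl⟩ (by
      rintro x ⟨W, hW, rfl⟩
      have h1 := hZle W hW n; have h2 := hZle W hW (n+2)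
      have h3 := hW.2.2.2.2 n; linarith)
    linarith
  -- perturbation lemma: lowering the tail from m+1 stays in F, so t ≤ 0
  have pert : ∀ (m : ℕ) (t : ℝ), 0 ≤ t → (∀ n, m + 1 ≤ n → X n ≤ Z n - t) →
      Z m + Z (m+2) + t ≤ 2 * Z (m+1) → t ≤ 0 := by
    intro m t ht hX' hconc
    set W : ℕ → ℝ := fun n => if n ≤ m then Z n else Z n - t with hWdef
    have hjm : Z m + t ≤ Z (m+1) := by
      have h1 := hZmono (m+1); linarith
    have hWF : W ∈ F := by
      refine ⟨?_, ?_, ?_, ?_, ?_⟩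
      · intro n; by_cases h : n ≤ m
        · simp only [hWdef, if_pos h]; exact hXZ n
        · simp only [hWdef, if_neg h]; exact hX' n (by omega)
      · simp only [hWdef, if_pos (Nat.zero_le m)]; exact hZ0
      · intro n
        by_cases h1 : n + 1 ≤ m
        · simp only [hWdef, if_pos (by omega : n ≤ m), if_pos h1]; exact hZmono n
        · by_cases h2 : n ≤ m
          · have hnm : n = m := by omega
            simp only [hWdef, if_pos h2, if_neg h1]
            subst hnm; linarith
          · simp only [hWdef, if_neg h2, if_neg h1]; linarith [hZmono n]
      · intro n
        by_cases h1 : n + 1 ≤ m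
        · simp only [hWdef, if_pos (by omega : n ≤ m), if_pos h1]; exact hZcap n
        · by_cases h2 : n ≤ m
          · simp only [hWdef, if_pos h2, if_neg h1]; linarith [hZcap n]
          · simp only [hWdef, if_neg h2, if_neg h1]; linarith [hZcap n]
      · intro n
        by_cases h1 : n + 2 ≤ m
        · simp only [hWdef, if_pos (by omega : n ≤ m), if_pos (by omega : n + 1 ≤ m),
            if_pos h1]
          exact hZconc n
        · by_cases h2 : n + 1 ≤ m
          · simp only [hWdef, if_pos (by omega : n ≤ m), if_pos h2, if_neg h1]
            linarith [hZconc n]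
          · by_cases h3 : n ≤ m
            · have hnm : n = m := by omega
              simp only [hWdef, if_pos h3, if_neg h2, if_neg h1]
              subst hnm; linarith
            · simp only [hWdef, if_neg h3, if_neg h2, if_neg h1]; linarith [hZconc n]
    have hfin := hZle W hWF (m+1)
    simp only [hWdef, if_neg (by omega : ¬ m + 1 ≤ m)] at hfin
    linarith
  have hζanti : Antitone (fun n => Z (n+1) - Z n) := antitone_nat_of_succ_le fun n => by
    have := hZconc n
    show Z (n+1+1) - Z (n+1) ≤ Z (n+1) - Z n
    linarith
  have hζ0 : ∀ n, 0 ≤ Z (n+1) - Z n := fun n => by linarith [hZmono n]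
  have hζη : ∀ n, Z (n+1) - Z n ≤ η n := fun n => by linarith [hZcap n]
  have hζlim : Tendsto (fun n => Z (n+1) - Z n) atTop (nhds 0) :=
    squeeze_zero hζ0 hζη hηl
  -- key lemma
  have key : ∀ ε : ℝ, 0 < ε → ∀ N : ℕ, ∃ n, N ≤ n ∧ Z n - X n < ε := by
    intro ε hε N
    by_contra hcon
    push_neg at hcon
    -- step 1: increments constant from N on
    have step1 : ∀ m, N ≤ m → Z (m+2) - Z (m+1) = Z (m+1) - Z m := by
      intro m hm
      set d := 2 * Z (m+1) - Z m - Z (m+2) with hddef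
      have hd0 : 0 ≤ d := by have := hZconc m; linarith
      have ht0 : (0:ℝ) ≤ min ε d := le_min hε.le hd0
      have hle := pert m (min ε d) ht0
        (fun n hn => by
          have h2 := hcon n (by omega)
          have h3 : min ε d ≤ ε := min_le_left _ _
          linarith)
        (by have h3 : min ε d ≤ d := min_le_right _ _; linarith)
      have hd : d ≤ 0 := by
        by_contra hdpos
        push_neg at hdpos
        have := lt_min hε hdpos
        linarith
      linarith
    have const : ∀ n, N ≤ n → Z (n+1) - Z n = Z (N+1) - Z N := by
      intro n hn
      induction n, hn using Nat.le_induction with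
      | base => rfl
      | succ n hn ih => rw [step1 n hn]; exact ih
    have hZN0 : Z (N+1) - Z N = 0 := by
      have h1 : Tendsto (fun n => Z (n+1) - Z n) atTop (nhds (Z (N+1) - Z N)) :=
        tendsto_const_nhds.congr'
          (eventually_atTop.2 ⟨N, fun n hn => (const n hn).symm⟩)
      exact tendsto_nhds_unique h1 hζlim
    -- step 2
    have hex : ∃ k, Z (k+1) - Z k = 0 := ⟨N, hZN0⟩
    set K := Nat.find hex with hKdef
    have hKspec : Z (K+1) - Z K = 0 := Nat.find_spec hex
    have hζzero : ∀ n, K ≤ n → Z (n+1) - Z n = 0 := fun n hn =>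
      le_antisymm (hKspec ▸ hζanti hn) (hζ0 n)
    have hZconst : ∀ n, K ≤ n → Z n = Z K := by
      intro n hn
      induction n, hn using Nat.le_induction with
      | base => rfl
      | succ n hn ih => have := hζzero n hn; linarith
    have hKN : K ≤ N := Nat.find_le hZN0
    rcases Nat.eq_zero_or_eq_succ_pred K with hK0 | hKs
    · -- K = 0 : Z ≡ 0, contradiction
      have hZN : Z N = Z K := hZconst N hKN
      have : Z K = 0 := by rw [hK0]; exact hZ0
      have h1 := hcon N le_rfl
      have h2 : (0:ℝ) ≤ X N := hX0 ▸ hXmono (Nat.zero_le N)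
      rw [hZN, this] at h1; linarith
    · set k := K - 1 with hkdef
      have hKk : K = k + 1 := hKs
      have hζkpos : 0 < Z (k+1) - Z k := by
        rcases lt_or_eq_of_le (hζ0 k) with h | h
        · exact h
        · exact absurd h.symm (Nat.find_min hex (by omega))
      set t := min ε (Z (k+1) - Z k) with htdef
      have htpos : 0 < t := lt_min hε hζkpos
      have hle := pert k t (le_of_lt htpos)
        (fun n hn => by
          have hnK : K ≤ n := by omega
          have hZn : Z n = Z K := hZconst n hnK
          have hZmax : Z (max n N) = Z K := hZconst _ (le_trans hnK (le_max_left _ _))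
          have h2 := hcon (max n N) (le_max_right _ _)
          have h3 : X n ≤ X (max n N) := hXmono (le_max_left _ _)
          have h4 : t ≤ ε := min_le_left _ _
          rw [hZmax] at h2; rw [hZn]; linarith)
        (by
          have h1 : Z (k+2) = Z K := hZconst (k+2) (by omega)
          have h2 : Z (k+1) = Z K := hZconst (k+1) (by omega)
          have h3 : t ≤ Z (k+1) - Z k := min_le_right _ _
          rw [h1]; linarith)
      linarith
  -- liminf
  have hsum : ∀ n, ∑ j ∈ Finset.range n, ((Z (j+1) - Z j) - ξ j) = Z n - X n := by
    intro n
    rw [Finset.sum_sub_distrib, Finset.sum_range_sub (f := Z), hZ0, hXdef]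
    ring
  have hlim : liminf (fun n => Z n - X n) atTop = 0 := by
    rw [liminf_eq]
    have h0S : (0:ℝ) ∈ {a : ℝ | ∀ᶠ n in atTop, a ≤ Z n - X n} :=
      Eventually.of_forall fun n => by linarith [hXZ n]
    have hub : ∀ a ∈ {a : ℝ | ∀ᶠ n in atTop, a ≤ Z n - X n}, a ≤ 0 := by
      intro a ha
      by_contra hpos
      push_neg at hpos
      obtain ⟨N, hN⟩ := eventually_atTop.1 ha
      obtain ⟨n, hn, hlt⟩ := key a hpos N
      exact absurd (hN n hn) (not_le.2 hlt)
    exact le_antisymm (csSup_le ⟨0, h0S⟩ hub) (le_csSup ⟨0, hub⟩ h0S)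
  refine ⟨fun n => Z (n+1) - Z n, hζanti, hζ0, hζlim, ?_, ?_, hζη⟩
  · intro n
    rw [Finset.sum_range_sub (f := Z), hZ0]
    have := hXZ n
    rw [hXdef] at this
    simpa using this
  · have heq : (fun n => ∑ j ∈ Finset.range n, ((Z (j+1) - Z j) - ξ j)) =
        fun n => Z n - X n := funext hsum
    rw [heq]
    exact hlim
end

section
/- Let ξ, η be nonincreasing nonnegative sequences converging to 0 with ξ ≺ η, and for t ≥ 0 define η(t) by η(t)_n = min(t, η_n). Then there is a minimal t ∈ [ξ_1, η_1] such that ξ ≺ η(t), and for that minimal t one has inf_k ∑_{j=1}^k (η(t)_j − ξ_j) = 0; moreover either ξ ≼ η(t) or ∑_{j=1}^n (η(t)_j − ξ_j) = 0 for some integer n ≥ 1. -/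
/-!
The set of admissible levels `s` (those with `ξ ≺ η(s)`) contains `η₁`, is bounded below by `ξ₁`
and is closed, since each partial sum of `η(s)` is continuous in `s`; so it has a least element `t`.
If the partial sums of `η(t) - ξ` stayed above some `ε > 0`, lowering `t` to a nearby `s` would
keep `ξ ≺ η(s)`: as `η → 0`, the sequences `η(s)` and `η(t)` differ only in finitely many
coordinates `N`, each by at most `t - s`. Hence the infimum of the partial sums is `0`, and if it is
not attained it is the liminf.
-/

open Finset Filter Topology

/-- `ξ ≺ η`, with sequences indexed from `0`. -/
def Submajorized (ξ η : ℕ → ℝ) : Prop :=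
  ∀ n, ∑ j ∈ range n, ξ j ≤ ∑ j ∈ range n, η j

theorem submajorized_iff_sum_sub_nonneg {ξ η : ℕ → ℝ} :
    Submajorized ξ η ↔ ∀ n, 0 ≤ ∑ j ∈ range n, (η j - ξ j) := by
  simp only [Submajorized, sum_sub_distrib, sub_nonneg]

theorem head_le_of_submajorized_min {ξ η : ℕ → ℝ} {s : ℝ}
    (h : Submajorized ξ fun j => min s (η j)) : ξ 0 ≤ s := by
  have h1 := h 1
  rw [sum_range_one, sum_range_one] at h1
  exact h1.trans (min_le_left s (η 0))

theorem isClosed_setOf_submajorized_min (ξ η : ℕ → ℝ) :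
    IsClosed {s : ℝ | Submajorized ξ fun j => min s (η j)} := by
  simp only [Submajorized, Set.ofPred_forall]
  exact isClosed_iInter fun n => isClosed_le continuous_const <|
    continuous_finsetSum _ fun j _ => continuous_id.min continuous_const

theorem sum_min_sub_sum_min_le {η : ℕ → ℝ} {s t : ℝ} (hst : s ≤ t) {N : ℕ}
    (hN : ∀ j, N ≤ j → η j ≤ s) (n : ℕ) :
    ∑ j ∈ range n, min t (η j) - ∑ j ∈ range n, min s (η j) ≤ N * (t - s) := by
  rw [← sum_sub_distrib, ← sum_filter_of_ne (p := (· < N))]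
  · calc _ ≤ #(filter (· < N) (range n)) • (t - s) :=
          sum_le_card_nsmul _ _ _ fun j _ => by
            simp only [min_def]; split_ifs <;> linarith
      _ ≤ N * (t - s) := by
          rw [nsmul_eq_mul]
          refine mul_le_mul_of_nonneg_right ?_ (sub_nonneg.2 hst)
          exact_mod_cast (card_le_card fun j hj => mem_range.2 (mem_filter.1 hj).2).trans
            (card_range N).le
  · intro j _ hj
    by_contra! hNj
    simp [min_eq_right (hN j hNj), min_eq_right ((hN j hNj).trans hst)] at hj

theorem exists_sum_min_sub_lt_of_isLeast {ξ η : ℕ → ℝ} (hξ0 : 0 ≤ ξ 0)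
    (hηl : Tendsto η atTop (𝓝 0)) {t : ℝ}
    (ht : IsLeast {s | Submajorized ξ fun j => min s (η j)} t) {ε : ℝ} (hε : 0 < ε) :
    ∃ k, ∑ j ∈ range (k + 1), (min t (η j) - ξ j) < ε := by
  by_contra! hge
  -- At `t = ξ 0` the first partial sum already vanishes.
  have hξt : ξ 0 < t := by
    refine (head_le_of_submajorized_min ht.1).lt_of_ne fun h => ?_
    have := hge 0
    simp only [zero_add, sum_range_one, ← h] at this
    linarith [min_le_left (ξ 0) (η 0)]
  obtain ⟨N, hN⟩ : ∃ N, ∀ j, N ≤ j → η j ≤ (ξ 0 + t) / 2 :=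
    eventually_atTop.1 (hηl.eventually (ge_mem_nhds (by linarith)))
  set s := max ((ξ 0 + t) / 2) (t - ε / (N + 1))
  have hst : s < t := max_lt (by linarith) (by linarith [div_pos hε (Nat.cast_add_one_pos N)])
  have hgap : N * (t - s) < ε := by
    have : (N + 1) * (t - s) ≤ ε := by
      rw [← le_div_iff₀' (Nat.cast_add_one_pos N)]
      linarith [le_max_right ((ξ 0 + t) / 2) (t - ε / (N + 1))]
    nlinarith
  have hs : Submajorized ξ fun j => min s (η j) := by
    refine submajorized_iff_sum_sub_nonneg.2 fun n => ?_
    rcases n with _ | k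
    · simp
    · have := sum_min_sub_sum_min_le hst.le (fun j hj => (hN j hj).trans (le_max_left _ _)) (k + 1)
      have := hge k
      rw [sum_sub_distrib] at this ⊢
      linarith
  exact (ht.2 hs).not_gt hst

theorem liminf_eq_zero_of_pos_of_iInf_eq_zero {f : ℕ → ℝ} (hpos : ∀ n, 0 < f n)
    (hinf : ⨅ n, f n = 0) : liminf f atTop = 0 := by
  have hbdd : BddBelow (Set.range f) := ⟨0, Set.forall_mem_range.2 fun n => (hpos n).le⟩
  have hfreq : ∀ ε > 0, ∃ᶠ n in atTop, f n < ε := by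
    intro ε hε
    refine frequently_atTop.2 fun m => ?_
    -- Below `δ` only indices `n > m` can occur.
    set δ := min ε ((range (m + 1)).inf' nonempty_range_add_one f)
    have hδ : 0 < δ := lt_min hε ((lt_inf'_iff _).2 fun n _ => hpos n)
    obtain ⟨n, hn⟩ := exists_lt_of_ciInf_lt (hinf.trans_lt hδ)
    refine ⟨n, ?_, hn.trans_le (min_le_left _ _)⟩
    by_contra! hnm
    exact hn.not_ge ((min_le_right _ _).trans (inf'_le _ (mem_range.2 (by omega))))
  refine le_antisymm (le_of_forall_pos_le_add fun ε hε => ?_) ?_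
  · simpa using liminf_le_of_frequently_le ((hfreq ε hε).mono fun n h => h.le)
      (isBoundedUnder_of ⟨0, fun n => (hpos n).le⟩)
  · exact le_liminf_of_le (IsCoboundedUnder.of_frequently_le ((hfreq 1 one_pos).mono fun n h => h.le))
      (Eventually.of_forall fun n => (hpos n).le)

theorem stmt5_general (ξ η : ℕ → ℝ)
    (hξ0 : ∀ n, 0 ≤ ξ n)
    (hηa : Antitone η) (hηl : Tendsto η atTop (nhds 0))
    (hmaj : ∀ n, ∑ j ∈ Finset.range n, ξ j ≤ ∑ j ∈ Finset.range n, η j) :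
    ∃ t : ℝ, ξ 0 ≤ t ∧ t ≤ η 0 ∧
      (∀ n, ∑ j ∈ Finset.range n, ξ j ≤ ∑ j ∈ Finset.range n, min t (η j)) ∧
      (∀ s, ξ 0 ≤ s → s ≤ η 0 →
        (∀ n, ∑ j ∈ Finset.range n, ξ j ≤ ∑ j ∈ Finset.range n, min s (η j)) → t ≤ s) ∧
      (⨅ k : ℕ, ∑ j ∈ Finset.range (k + 1), (min t (η j) - ξ j)) = 0 ∧
      (Filter.liminf (fun n => ∑ j ∈ Finset.range n, (min t (η j) - ξ j)) atTop = 0 ∨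
        ∃ n, 1 ≤ n ∧ ∑ j ∈ Finset.range n, (min t (η j) - ξ j) = 0) := by
  set S := {s : ℝ | Submajorized ξ fun j => min s (η j)}
  have hηS : η 0 ∈ S := fun n =>
    (hmaj n).trans_eq (sum_congr rfl fun j _ => (min_eq_right (hηa (Nat.zero_le j))).symm)
  have ht : IsLeast S (sInf S) := (isClosed_setOf_submajorized_min ξ η).isLeast_csInf
    ⟨_, hηS⟩ ⟨ξ 0, fun s hs => head_le_of_submajorized_min hs⟩
  set t := sInf S
  have hgap := submajorized_iff_sum_sub_nonneg.1 ht.1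
  have hinf : ⨅ k, ∑ j ∈ range (k + 1), (min t (η j) - ξ j) = 0 :=
    ciInf_eq_of_forall_ge_of_forall_gt_exists_lt (fun k => hgap (k + 1))
      fun ε hε => exists_sum_min_sub_lt_of_isLeast (hξ0 0) hηl ht hε
  refine ⟨t, head_le_of_submajorized_min ht.1, ht.2 hηS, ht.1, fun s _ _ hs => ht.2 hs, hinf, ?_⟩
  by_cases hzero : ∃ n, 1 ≤ n ∧ ∑ j ∈ range n, (min t (η j) - ξ j) = 0
  · exact Or.inr hzero
  · push Not at hzero
    left
    rw [← liminf_nat_add _ 1]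
    exact liminf_eq_zero_of_pos_of_iInf_eq_zero
      (fun k => (hgap (k + 1)).lt_of_ne' (hzero (k + 1) le_add_self)) hinf

theorem stmt5 (ξ η : ℕ → ℝ)
    (hξa : Antitone ξ) (hξ0 : ∀ n, 0 ≤ ξ n) (hξl : Tendsto ξ atTop (nhds 0))
    (hηa : Antitone η) (hη0 : ∀ n, 0 ≤ η n) (hηl : Tendsto η atTop (nhds 0))
    (hmaj : ∀ n, ∑ j ∈ Finset.range n, ξ j ≤ ∑ j ∈ Finset.range n, η j) :
    ∃ t : ℝ, ξ 0 ≤ t ∧ t ≤ η 0 ∧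
      (∀ n, ∑ j ∈ Finset.range n, ξ j ≤ ∑ j ∈ Finset.range n, min t (η j)) ∧
      (∀ s, ξ 0 ≤ s → s ≤ η 0 →
        (∀ n, ∑ j ∈ Finset.range n, ξ j ≤ ∑ j ∈ Finset.range n, min s (η j)) → t ≤ s) ∧
      (⨅ k : ℕ, ∑ j ∈ Finset.range (k + 1), (min t (η j) - ξ j)) = 0 ∧
      (Filter.liminf (fun n => ∑ j ∈ Finset.range n, (min t (η j) - ξ j)) atTop = 0 ∨
        ∃ n, 1 ≤ n ∧ ∑ j ∈ Finset.range n, (min t (η j) - ξ j) = 0) :=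
  stmt5_general ξ η hξ0 hηa hηl hmaj
end

section
/- If ξ and η are nonincreasing nonnegative sequences converging to 0 such that for every n ≥ 0 the tail sequence η^{(n)} is NOT majorized by ξ^{(n)}, then there exists a nonincreasing nonnegative sequence ζ converging to 0 with ζ ≤ η pointwise and ζ block-majorized by ξ (i.e., ζ ≺ ξ and ∑_{j=1}^{n_k} ζ_j = ∑_{j=1}^{n_k} ξ_j for some strictly increasing sequence n_k → ∞). -/
open Finset Filter Topology

noncomputable def sfun (ξ : ℕ → ℝ) (n : ℕ) : ℝ := ∑ j ∈ Finset.range n, ξ j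

noncomputable def gfun (ξ η : ℕ → ℝ) : ℕ → ℝ × ℝ
  | 0 => (min (η 0) (ξ 0), min (η 0) (ξ 0))
  | n + 1 =>
    (min (η (n + 1)) (min (gfun ξ η n).1 (sfun ξ (n + 2) - (gfun ξ η n).2)),
     (gfun ξ η n).2 + min (η (n + 1)) (min (gfun ξ η n).1 (sfun ξ (n + 2) - (gfun ξ η n).2)))

noncomputable def zfun (ξ η : ℕ → ℝ) (n : ℕ) : ℝ := (gfun ξ η n).1

theorem stmt7 (ξ η : ℕ → ℝ)
    (hξa : Antitone ξ) (hξ0 : ∀ n, 0 ≤ ξ n) (hξl : Tendsto ξ atTop (nhds 0))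
    (hηa : Antitone η) (hη0 : ∀ n, 0 ≤ η n) (hηl : Tendsto η atTop (nhds 0))
    (hnot : ∀ n, ¬ ∀ m, ∑ j ∈ Finset.range m, η (n + j) ≤ ∑ j ∈ Finset.range m, ξ (n + j)) :
    ∃ ζ : ℕ → ℝ, Antitone ζ ∧ (∀ n, 0 ≤ ζ n) ∧ Tendsto ζ atTop (nhds 0) ∧
      (∀ n, ζ n ≤ η n) ∧
      (∀ n, ∑ j ∈ Finset.range n, ζ j ≤ ∑ j ∈ Finset.range n, ξ j) ∧
      ∃ nk : ℕ → ℕ, StrictMono nk ∧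
        ∀ k, ∑ j ∈ Finset.range (nk k), ζ j = ∑ j ∈ Finset.range (nk k), ξ j := by
  classical
  set ζ : ℕ → ℝ := zfun ξ η with hζdef
  have hsz : ∀ n, sfun ζ (n + 1) = sfun ζ n + ζ n := fun n => Finset.sum_range_succ ζ n
  have hsξ : ∀ n, sfun ξ (n + 1) = sfun ξ n + ξ n := fun n => Finset.sum_range_succ ξ n
  have hz0 : ζ 0 = min (η 0) (ξ 0) := rfl
  have hsz1 : sfun ζ 1 = ζ 0 := by simp [sfun]
  have hsξ1 : sfun ξ 1 = ξ 0 := by simp [sfun]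
  have hsz0 : sfun ζ 0 = 0 := by simp [sfun]
  have hsξ0 : sfun ξ 0 = 0 := by simp [sfun]
  have hg2 : ∀ n, (gfun ξ η n).2 = sfun ζ (n + 1) := by
    intro n
    induction n with
    | zero =>
        show min (η 0) (ξ 0) = sfun ζ 1
        rw [hsz1, hz0]
    | succ n ih =>
        have h1 : (gfun ξ η (n + 1)).2 = (gfun ξ η n).2 + ζ (n + 1) := rfl
        rw [h1, ih, ← hsz]
  have hzs : ∀ n, ζ (n + 1) = min (η (n + 1)) (min (ζ n) (sfun ξ (n + 2) - sfun ζ (n + 1))) := by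
    intro n
    have h : ζ (n + 1)
        = min (η (n + 1)) (min (ζ n) (sfun ξ (n + 2) - (gfun ξ η n).2)) := rfl
    rw [h, hg2 n]
  -- invariants
  have inv : ∀ n, 0 ≤ ζ n ∧ sfun ζ (n + 1) ≤ sfun ξ (n + 1) := by
    intro n
    induction n with
    | zero =>
        refine ⟨le_min (hη0 0) (hξ0 0), ?_⟩
        rw [hsz 0, hz0, hsz0, hsξ1, zero_add]
        exact min_le_right _ _
    | succ n ih =>
        have ht : 0 ≤ sfun ξ (n + 2) - sfun ζ (n + 1) := by
          have h1 := ih.2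
          have h2 : sfun ξ (n + 1) ≤ sfun ξ (n + 2) := by
            rw [hsξ (n + 1)]; linarith [hξ0 (n + 1)]
          linarith
        constructor
        · rw [hzs n]
          exact le_min (hη0 _) (le_min ih.1 ht)
        · have hle : ζ (n + 1) ≤ sfun ξ (n + 2) - sfun ζ (n + 1) := by
            rw [hzs n]
            exact le_trans (min_le_right _ _) (min_le_right _ _)
          rw [hsz (n + 1)]
          linarith
  have hSzle : ∀ n, sfun ζ n ≤ sfun ξ n := by
    intro n
    cases n with
    | zero => exact le_of_eq (by rw [hsz0, hsξ0])
    | succ n => exact (inv n).2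
  have hzle : ∀ n, ζ n ≤ η n := by
    intro n
    cases n with
    | zero => exact min_le_left _ _
    | succ n => rw [hzs n]; exact min_le_left _ _
  have hzanti : ∀ n, ζ (n + 1) ≤ ζ n := by
    intro n
    rw [hzs n]
    exact le_trans (min_le_right _ _) (min_le_left _ _)
  have hP00 : sfun ζ 0 = sfun ξ 0 := by rw [hsz0, hsξ0]
  -- key claim: infinitely many equality points
  have key : ∀ N, ∃ n, N < n ∧ sfun ζ n = sfun ξ n := by
    by_contra hcon
    push_neg at hcon
    obtain ⟨N₀, hN₀⟩ := hcon
    obtain ⟨N, hPN, hgt⟩ :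
        ∃ N, sfun ζ N = sfun ξ N ∧ ∀ n, N < n → sfun ζ n < sfun ξ n := by
      refine ⟨Nat.findGreatest (fun n => sfun ζ n = sfun ξ n) N₀, ?_, ?_⟩
      · exact Nat.findGreatest_spec (P := fun n => sfun ζ n = sfun ξ n) (Nat.zero_le _) hP00
      intro n hn
      rcases lt_or_ge N₀ n with h | h
      · exact lt_of_le_of_ne (hSzle n) (hN₀ n h)
      · exact lt_of_le_of_ne (hSzle n) (Nat.findGreatest_is_greatest hn h)
    -- step lemma
    have hstep : ∀ n, N ≤ n + 1 → ζ (n + 1) = min (η (n + 1)) (ζ n) := by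
      intro n hn
      have hlt : ζ (n + 1) < sfun ξ (n + 2) - sfun ζ (n + 1) := by
        have h1 := hgt (n + 2) (by omega)
        rw [hsz (n + 1)] at h1
        linarith
      rw [hzs n] at hlt ⊢
      rcases le_total (min (η (n + 1)) (ζ n)) (sfun ξ (n + 2) - sfun ζ (n + 1)) with h | h
      · rw [← min_assoc, min_eq_left h]
      · rw [← min_assoc, min_eq_right h] at hlt
        linarith
    -- show ζ n = η n for all n ≥ N
    have hzeq : ∀ n, N ≤ n → ζ n = η n := by
      cases N with
      | zero =>
          have hbase : ζ 0 = η 0 := by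
            have h1 := hgt 1 (by omega)
            rw [hsz1, hsξ1] at h1
            rcases le_total (η 0) (ξ 0) with h | h
            · rw [hz0]; exact min_eq_left h
            · have hm : ζ 0 = ξ 0 := by rw [hz0]; exact min_eq_right h
              rw [hm] at h1
              exact absurd h1 (lt_irrefl _)
          have hall : ∀ n, ζ n = η n := by
            intro n
            induction n with
            | zero => exact hbase
            | succ n ih =>
                rw [hstep n (by omega), ih]
                exact min_eq_left (hηa (Nat.le_succ n))
          exact fun n _ => hall n
      | succ K =>
          have hcξ : ∀ j, K ≤ j → ξ j ≤ ζ K := by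
            intro j hj
            have h1 := hsz K
            have h2 := hsξ K
            have h4 := hSzle K
            have h5 : ξ K ≤ ζ K := by rw [hPN] at h1; linarith
            exact le_trans (hξa hj) h5
          have hcap : ∀ n, K + 1 ≤ n → ζ n = min (η n) (ζ K) := by
            intro n
            induction n with
            | zero => intro h; omega
            | succ n ih =>
                intro hn
                rcases Nat.lt_or_ge n K with h | h
                · omega
                · rcases Nat.eq_or_lt_of_le h with hEq | hlt
                  · rw [hstep n (by omega), ← hEq]
                  · have hn' : K + 1 ≤ n := hlt
                    rw [hstep n (by omega), ih hn']
                    have hab : η (n + 1) ≤ η n := hηa (Nat.le_succ n)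
                    rcases le_total (η (n + 1)) (ζ K) with hh | hh
                    · rw [min_eq_left hh, min_eq_left (le_min hab hh)]
                    · rw [min_eq_right (hh.trans hab)]
          rcases eq_or_lt_of_le (inv K).1 with hc0 | hcpos
          · -- ζ K = 0 : contradiction at K+2
            have hξN : ξ (K + 1) = 0 := by
              have h1 := hcξ (K + 1) (by omega)
              have h2 := hξ0 (K + 1)
              linarith
            have hzN : ζ (K + 1) = 0 := by
              rw [hcap (K + 1) le_rfl, ← hc0]
              exact min_eq_right (hη0 _)
            have h1 := hgt (K + 2) (by omega)
            rw [hsz (K + 1), hsξ (K + 1), hzN, hξN, hPN] at h1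
            linarith
          · -- ζ K > 0
            have hev : ∃ n, K + 1 ≤ n ∧ η n ≤ ζ K := by
              have h1 : ∀ᶠ n in atTop, η n < ζ K := hηl.eventually_lt_const hcpos
              obtain ⟨n, hn1, hn2⟩ := (h1.and (eventually_ge_atTop (K + 1))).exists
              exact ⟨n, hn2, hn1.le⟩
            obtain ⟨M, hM1, hM2, hMmin⟩ :
                ∃ M, K + 1 ≤ M ∧ η M ≤ ζ K ∧
                  ∀ k, K + 1 ≤ k → k < M → ζ K < η k :=
              ⟨Nat.find hev, (Nat.find_spec hev).1, (Nat.find_spec hev).2,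
                fun k hk1 hk2 =>
                  lt_of_not_ge (fun hle => Nat.find_min hev hk2 ⟨hk1, hle⟩)⟩
            have hMN : M = K + 1 := by
              by_contra hne
              have hMgt : K + 1 < M := lt_of_le_of_ne hM1 (Ne.symm hne)
              obtain ⟨d, hd⟩ : ∃ d, M = (K + 1) + d := ⟨M - (K + 1), by omega⟩
              have hform : ∀ j ∈ Finset.range d, ζ ((K + 1) + j) = ζ K := by
                intro j hj
                have hj' := Finset.mem_range.mp hj
                have hgtc := hMmin ((K + 1) + j) (by omega) (by omega)
                rw [hcap ((K + 1) + j) (by omega)]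
                exact min_eq_right hgtc.le
              have e1 : sfun ζ M = sfun ζ (K + 1) + ∑ j ∈ Finset.range d, ζ ((K + 1) + j) := by
                rw [hd]; exact Finset.sum_range_add ζ (K + 1) d
              have e2 : sfun ξ M = sfun ξ (K + 1) + ∑ j ∈ Finset.range d, ξ ((K + 1) + j) := by
                rw [hd]; exact Finset.sum_range_add ξ (K + 1) d
              have e3 : ∑ j ∈ Finset.range d, ζ ((K + 1) + j) = (d : ℝ) * ζ K := by
                rw [Finset.sum_congr rfl hform, Finset.sum_const, card_range, nsmul_eq_mul]
              have e4 : ∑ j ∈ Finset.range d, ξ ((K + 1) + j) ≤ (d : ℝ) * ζ K := by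
                calc ∑ j ∈ Finset.range d, ξ ((K + 1) + j)
                    ≤ ∑ _j ∈ Finset.range d, ζ K :=
                      Finset.sum_le_sum (fun j _ => hcξ ((K + 1) + j) (by omega))
                  _ = (d : ℝ) * ζ K := by
                      rw [Finset.sum_const, card_range, nsmul_eq_mul]
              have hlt := hgt M hMgt
              rw [e1, e2, e3, hPN] at hlt
              linarith
            intro n hn
            rw [hcap n hn]
            have hηc : η (K + 1) ≤ ζ K := by rw [← hMN]; exact hM2
            exact min_eq_left (le_trans (hηa hn) hηc)
    -- final contradiction using hnot N
    have h2 := hnot N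
    push_neg at h2
    obtain ⟨m, hm⟩ := h2
    have e1 : sfun ζ (N + m) = sfun ζ N + ∑ j ∈ Finset.range m, ζ (N + j) :=
      Finset.sum_range_add ζ N m
    have e2 : sfun ξ (N + m) = sfun ξ N + ∑ j ∈ Finset.range m, ξ (N + j) :=
      Finset.sum_range_add ξ N m
    have e3 : ∑ j ∈ Finset.range m, ζ (N + j) = ∑ j ∈ Finset.range m, η (N + j) :=
      Finset.sum_congr rfl (fun j _ => hzeq (N + j) (by omega))
    have hfin := hSzle (N + m)
    rw [e1, e2, e3, hPN] at hfin
    linarith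
  -- build nk
  choose f hf1 hf2 using key
  have hnkmono : StrictMono (fun k => f^[k] 0) := by
    apply strictMono_nat_of_lt_succ
    intro k
    simp only [Function.iterate_succ_apply']
    exact hf1 _
  have hnkeq : ∀ k, sfun ζ (f^[k] 0) = sfun ξ (f^[k] 0) := by
    intro k
    cases k with
    | zero => simpa using hP00
    | succ k =>
        simp only [Function.iterate_succ_apply']
        exact hf2 _
  exact ⟨ζ, antitone_nat_of_succ_le hzanti, fun n => (inv n).1,
    squeeze_zero (fun n => (inv n).1) hzle hηl, hzle, hSzle,
    fun k => f^[k] 0, hnkmono, hnkeq⟩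
end

section
/- Let ξ, η be nonincreasing nonnegative sequences converging to 0. The following are equivalent: (i) there is a strictly increasing sequence of integers n_k with n_0 = 0 such that ∑_{j=n}^{n_k} (η_j − ξ_j) ≥ 0 for all n_{k−1} < n ≤ n_k and all k; (iii) there exists a nonincreasing nonnegative sequence ζ converging to 0 with ζ ≤ η pointwise and ζ ≺_b ξ; (iii') there exists a nonincreasing nonnegative sequence ρ converging to 0 with ξ ≤ ρ pointwise and η ≺_b ρ. -/
/-!
Write `D n = ∑_{j<n} (η_j - ξ_j)`. Condition (i) says exactly that `D` has infinitely many
record times (indices `n` with `D m ≤ D n` for all `m ≤ n`), and in (iii) as well as in (iii')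
every index at which the block majorization is an equality is such a record time.

Conversely, given the blocks between consecutive record times, `ζ` is obtained by truncating `η`
on each block at the least level at which the block sums of `ζ` and `ξ` agree; these levels
decrease from block to block, so `ζ` is nonincreasing. For `ρ` one takes the slopes of the least
concave majorant of `G n = ∑_{j<n} ξ_j + max_{m ≤ n} D m`, whose vertices are found by
repeatedly following a chord of maximal slope (the slopes tend to `0` by Cesàro). Before each
vertex there is a last index where `D` attains its running maximum, and there the partial sums
of `ρ` and `η` agree.
-/

open Finset Filter Topology

def IsRecord (D : ℕ → ℝ) (n : ℕ) : Prop := ∀ m ≤ n, D m ≤ D n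

lemma sum_Ico_nonneg_iff {f : ℕ → ℝ} {m n : ℕ} (h : m ≤ n) :
    0 ≤ ∑ j ∈ Ico m n, f j ↔ ∑ j ∈ range m, f j ≤ ∑ j ∈ range n, f j := by
  rw [sum_Ico_eq_sub _ h, sub_nonneg]

lemma exists_strictMono_zero_of_frequently {P : ℕ → Prop} (h : ∃ᶠ n in atTop, P n) (h0 : P 0) :
    ∃ nk : ℕ → ℕ, nk 0 = 0 ∧ StrictMono nk ∧ ∀ k, P (nk k) := by
  obtain ⟨φ, hφ, hφP⟩ := extraction_of_frequently_atTop (h.and_eventually (eventually_gt_atTop 0))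
  refine ⟨fun | 0 => 0 | k + 1 => φ k, rfl, strictMono_nat_of_lt_succ fun k => ?_, fun k => ?_⟩
  · cases k with
    | zero => exact (hφP 0).2
    | succ k => exact hφ k.lt_succ_self
  · cases k with
    | zero => exact h0
    | succ k => exact (hφP k).1

lemma isRecord_of_blockCondition {f : ℕ → ℝ} {nk : ℕ → ℕ} (h0 : nk 0 = 0) (hnk : StrictMono nk)
    (hcond : ∀ k m, nk k ≤ m → m < nk (k + 1) → 0 ≤ ∑ j ∈ Ico m (nk (k + 1)), f j) (K : ℕ) :
    IsRecord (fun n => ∑ j ∈ range n, f j) (nk K) := by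
  induction K with
  | zero =>
    intro m hm
    rw [h0] at hm ⊢
    rw [Nat.le_zero.1 hm]
  | succ K ih =>
    have hstep : ∀ m, nk K ≤ m → m ≤ nk (K + 1) →
        ∑ j ∈ range m, f j ≤ ∑ j ∈ range (nk (K + 1)), f j := fun m h₁ h₂ =>
      h₂.eq_or_lt.elim (fun h => h ▸ le_rfl) fun h => (sum_Ico_nonneg_iff h₂).1 (hcond K m h₁ h)
    intro m hm
    rcases le_total (nk K) m with h | h
    · exact hstep m h hm
    · exact (ih m h).trans (hstep _ le_rfl (hnk K.lt_succ_self).le)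

theorem blockCondition_iff_frequently_isRecord (f : ℕ → ℝ) :
    (∃ nk : ℕ → ℕ, nk 0 = 0 ∧ StrictMono nk ∧
        ∀ k m, nk k ≤ m → m < nk (k + 1) → 0 ≤ ∑ j ∈ Ico m (nk (k + 1)), f j) ↔
      ∃ᶠ n in atTop, IsRecord (fun n => ∑ j ∈ range n, f j) n := by
  constructor
  · rintro ⟨nk, h0, hnk, hcond⟩
    exact hnk.tendsto_atTop.frequently
      (Frequently.of_forall (isRecord_of_blockCondition h0 hnk hcond))
  · intro h
    obtain ⟨nk, h0, hnk, hrec⟩ :=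
      exists_strictMono_zero_of_frequently h fun m hm => by rw [Nat.le_zero.1 hm]
    exact ⟨nk, h0, hnk, fun k m _ hm => (sum_Ico_nonneg_iff hm.le).2 (hrec (k + 1) m hm.le)⟩

lemma frequently_isRecord_of_le {f g : ℕ → ℝ} (hfg : ∀ j, f j ≤ g j)
    (hf : ∀ n, ∑ j ∈ range n, f j ≤ 0) {mk : ℕ → ℕ} (hmk : StrictMono mk)
    (hmk0 : ∀ k, ∑ j ∈ range (mk k), f j = 0) :
    ∃ᶠ n in atTop, IsRecord (fun n => ∑ j ∈ range n, g j) n := by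
  refine hmk.tendsto_atTop.frequently (Frequently.of_forall fun k m hm => ?_)
  rw [← sum_Ico_nonneg_iff hm]
  calc 0 ≤ -∑ j ∈ range m, f j := neg_nonneg.2 (hf m)
    _ = ∑ j ∈ Ico m (mk k), f j := by rw [sum_Ico_eq_sub _ hm, hmk0]; ring
    _ ≤ ∑ j ∈ Ico m (mk k), g j := sum_le_sum fun j _ => hfg j

section Blocks

variable {u : ℕ → ℕ}

/-- The `k` with `u k ≤ n < u (k + 1)`, for strictly monotone `u` with `u 0 = 0`. -/
def blockIndex (u : ℕ → ℕ) (n : ℕ) : ℕ := Nat.findGreatest (fun k => u k ≤ n) n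

lemma blockIndex_eq (hu : StrictMono u) {k n : ℕ} (h₁ : u k ≤ n) (h₂ : n < u (k + 1)) :
    blockIndex u n = k :=
  Nat.findGreatest_eq_iff.2 ⟨hu.le_apply.trans h₁, fun _ => h₁,
    fun _ hkj _ hj => (h₂.trans_le (hu.monotone (Nat.succ_le_of_lt hkj))).not_ge hj⟩

lemma blockIndex_mono (u : ℕ → ℕ) : Monotone (blockIndex u) := fun _ _ h =>
  Nat.findGreatest_mono (fun _ hk => hk.trans h) h

lemma exists_block (hu : StrictMono u) (hu0 : u 0 = 0) (n : ℕ) :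
    ∃ k, u k ≤ n ∧ n < u (k + 1) := by
  have hex : ∃ k, n < u (k + 1) := ⟨n, n.lt_succ_self.trans_le hu.le_apply⟩
  refine ⟨Nat.find hex, ?_, Nat.find_spec hex⟩
  rcases h : Nat.find hex with _ | k
  · rw [hu0]
    exact n.zero_le
  · exact not_lt.1 (Nat.find_min hex (h ▸ k.lt_succ_self))

lemma le_and_eq_of_blocks (hu : StrictMono u) (hu0 : u 0 = 0) {A B : ℕ → ℝ} (h0 : A 0 = B 0)
    (hblock : ∀ k n, u k ≤ n → n < u (k + 1) → A n - A (u k) ≤ B n - B (u k))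
    (heq : ∀ k, A (u (k + 1)) - A (u k) = B (u (k + 1)) - B (u k)) :
    (∀ n, A n ≤ B n) ∧ ∀ k, A (u k) = B (u k) := by
  have hAB : ∀ k, A (u k) = B (u k) := by
    intro k
    induction k with
    | zero => rwa [hu0]
    | succ k ih => linarith [heq k]
  refine ⟨fun n => ?_, hAB⟩
  obtain ⟨k, h₁, h₂⟩ := exists_block hu hu0 n
  linarith [hblock k n h₁ h₂, hAB k]

end Blocks

lemma Continuous.exists_least_nonneg_eq {g : ℝ → ℝ} (hg : Continuous g) {s T : ℝ} (hT : 0 ≤ T)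
    (h0 : g 0 ≤ s) (hs : s ≤ g T) :
    ∃ t, 0 ≤ t ∧ g t = s ∧ ∀ t', 0 ≤ t' → s ≤ g t' → t ≤ t' := by
  set S := {t | 0 ≤ t ∧ g t = s}
  have hS : IsClosed S := isClosed_Ici.inter (isClosed_eq hg continuous_const)
  have hbdd : BddBelow S := ⟨0, fun _ ht => ht.1⟩
  have hsol : ∀ t', 0 ≤ t' → s ≤ g t' → ∃ x ∈ S, x ≤ t' := fun t' ht' hst' => by
    obtain ⟨x, hx, hgx⟩ := intermediate_value_Icc ht' hg.continuousOn ⟨h0, hst'⟩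
    exact ⟨x, ⟨hx.1, hgx⟩, hx.2⟩
  obtain ⟨x, hx, -⟩ := hsol T hT hs
  obtain ⟨hS0, hSs⟩ := hS.csInf_mem ⟨x, hx⟩ hbdd
  exact ⟨sInf S, hS0, hSs, fun t' h₁ h₂ =>
    let ⟨x, hx, hxt⟩ := hsol t' h₁ h₂; (csInf_le hbdd hx).trans hxt⟩

lemma sum_Ico_le_sum_Ico_min {ξ η : ℕ → ℝ} (hξ : Antitone ξ) (hη : Antitone η) {a b : ℕ}
    (htail : ∀ m, a ≤ m → m < b → 0 ≤ ∑ j ∈ Ico m b, (η j - ξ j)) {c : ℝ} (hc : ξ a ≤ c) :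
    ∑ j ∈ Ico a b, ξ j ≤ ∑ j ∈ Ico a b, min (η j) c := by
  induction h : b - a generalizing a with
  | zero => simp [Ico_eq_empty_of_le (Nat.sub_eq_zero_iff_le.1 h)]
  | succ d ih =>
    have hab : a < b := by omega
    by_cases hηc : η a ≤ c
    · have hsum := htail a le_rfl hab
      rw [sum_sub_distrib, sub_nonneg] at hsum
      rwa [sum_congr rfl fun j hj => min_eq_left ((hη (mem_Ico.1 hj).1).trans hηc)]
    · rw [sum_eq_sum_Ico_succ_bot hab, sum_eq_sum_Ico_succ_bot hab]
      gcongr ?_ + ?_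
      · exact le_min (hc.trans (not_le.1 hηc).le) hc
      · exact ih (fun m hm hmb => htail m (by omega) hmb) ((hξ a.le_succ).trans hc) (by omega)

lemma sum_Ico_min_le_sum_Ico {ξ η : ℕ → ℝ} (hξ : Antitone ξ) (hη : Antitone η) {a b : ℕ}
    (htail : ∀ m, a ≤ m → m < b → 0 ≤ ∑ j ∈ Ico m b, (η j - ξ j)) {t : ℝ}
    (ht : ∑ j ∈ Ico a b, min (η j) t = ∑ j ∈ Ico a b, ξ j) {n : ℕ} (h₁ : a ≤ n) (h₂ : n ≤ b) :
    ∑ j ∈ Ico a n, min (η j) t ≤ ∑ j ∈ Ico a n, ξ j := by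
  by_cases hn : ξ n ≤ t
  · have hrest := sum_Ico_le_sum_Ico_min hξ hη (fun m hm hmb => htail m (h₁.trans hm) hmb) hn
    rw [← sum_Ico_consecutive _ h₁ h₂, ← sum_Ico_consecutive ξ h₁ h₂] at ht
    linarith
  · exact sum_le_sum fun j hj =>
      (min_le_right _ _).trans ((not_le.1 hn).le.trans (hξ (mem_Ico.1 hj).2.le))

lemma exists_antitone_truncation_levels {ξ η : ℕ → ℝ} (hξ : Antitone ξ) (hξ0 : ∀ n, 0 ≤ ξ n)
    (hη : Antitone η) (hη0 : ∀ n, 0 ≤ η n) {nk : ℕ → ℕ} (hnk : StrictMono nk)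
    (hcond : ∀ k m, nk k ≤ m → m < nk (k + 1) → 0 ≤ ∑ j ∈ Ico m (nk (k + 1)), (η j - ξ j)) :
    ∃ t : ℕ → ℝ, Antitone t ∧ (∀ k, 0 ≤ t k) ∧
      ∀ k, ∑ j ∈ Ico (nk k) (nk (k + 1)), min (η j) (t k) = ∑ j ∈ Ico (nk k) (nk (k + 1)), ξ j := by
  have hlevel : ∀ k, ∃ t, 0 ≤ t ∧
      ∑ j ∈ Ico (nk k) (nk (k + 1)), min (η j) t = ∑ j ∈ Ico (nk k) (nk (k + 1)), ξ j ∧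
      ∀ t', 0 ≤ t' → ∑ j ∈ Ico (nk k) (nk (k + 1)), ξ j ≤
        ∑ j ∈ Ico (nk k) (nk (k + 1)), min (η j) t' → t ≤ t' := by
    intro k
    have hg : Continuous fun t => ∑ j ∈ Ico (nk k) (nk (k + 1)), min (η j) t := by fun_prop
    refine hg.exists_least_nonneg_eq (hη0 (nk k)) ?_ ?_
    · simp only [min_eq_right (hη0 _), sum_const_zero]
      exact sum_nonneg fun j _ => hξ0 j
    · have hsum := hcond k (nk k) le_rfl (hnk k.lt_succ_self)
      rw [sum_sub_distrib, sub_nonneg] at hsum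
      rwa [sum_congr rfl fun j hj => min_eq_left (hη (mem_Ico.1 hj).1)]
  choose t ht0 hteq htmin using hlevel
  have hξt : ∀ k, ξ (nk (k + 1)) ≤ t k := by
    intro k
    by_contra! h
    refine (hteq k).not_lt (sum_lt_sum_of_nonempty (nonempty_Ico.2 (hnk k.lt_succ_self)) ?_)
    exact fun j hj => (min_le_right _ _).trans_lt (h.trans_le (hξ (mem_Ico.1 hj).2.le))
  -- `t k` is already a large enough level on block `k + 1`, and `t (k + 1)` is the least one.
  refine ⟨t, antitone_nat_of_succ_le fun k => htmin (k + 1) (t k) (ht0 k) ?_, ht0, hteq⟩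
  exact sum_Ico_le_sum_Ico_min hξ hη (hcond (k + 1)) (hξt k)

theorem exists_truncation_of_blockCondition {ξ η : ℕ → ℝ} (hξ : Antitone ξ)
    (hξ0 : ∀ n, 0 ≤ ξ n) (hη : Antitone η) (hη0 : ∀ n, 0 ≤ η n) (hηl : Tendsto η atTop (𝓝 0))
    {nk : ℕ → ℕ} (h0 : nk 0 = 0) (hnk : StrictMono nk)
    (hcond : ∀ k m, nk k ≤ m → m < nk (k + 1) → 0 ≤ ∑ j ∈ Ico m (nk (k + 1)), (η j - ξ j)) :
    ∃ ζ : ℕ → ℝ, Antitone ζ ∧ (∀ n, 0 ≤ ζ n) ∧ Tendsto ζ atTop (𝓝 0) ∧ (∀ n, ζ n ≤ η n) ∧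
      (∀ n, ∑ j ∈ range n, ζ j ≤ ∑ j ∈ range n, ξ j) ∧
      ∃ mk : ℕ → ℕ, StrictMono mk ∧
        ∀ k, ∑ j ∈ range (mk k), ζ j = ∑ j ∈ range (mk k), ξ j := by
  obtain ⟨t, ht, ht0, hteq⟩ := exists_antitone_truncation_levels hξ hξ0 hη hη0 hnk hcond
  set ζ := fun n => min (η n) (t (blockIndex nk n)) with hζ
  have hζblock : ∀ k, ∀ j ∈ Ico (nk k) (nk (k + 1)), ζ j = min (η j) (t k) := fun k j hj => by
    simp only [hζ, blockIndex_eq hnk (mem_Ico.1 hj).1 (mem_Ico.1 hj).2]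
  have hζ0 : ∀ n, 0 ≤ ζ n := fun n => le_min (hη0 n) (ht0 _)
  obtain ⟨hζξ, hζξeq⟩ := le_and_eq_of_blocks hnk h0 (A := fun n => ∑ j ∈ range n, ζ j)
    (B := fun n => ∑ j ∈ range n, ξ j) (by simp)
    (fun k n h₁ h₂ => by
      simp only [← sum_Ico_eq_sub _ h₁]
      rw [sum_congr rfl fun j hj => hζblock k j (Ico_subset_Ico_right h₂.le hj)]
      exact sum_Ico_min_le_sum_Ico hξ hη (hcond k) (hteq k) h₁ h₂.le)
    (fun k => by
      simp only [← sum_Ico_eq_sub _ (hnk k.lt_succ_self).le]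
      rw [sum_congr rfl (hζblock k), hteq k])
  exact ⟨ζ, hη.min (ht.comp_monotone (blockIndex_mono nk)), hζ0,
    squeeze_zero hζ0 (fun n => min_le_left _ _) hηl, fun n => min_le_left _ _, hζξ, nk, hnk,
    hζξeq⟩

/-- The slope of the chord of `G` over `[a, a + n]`; it is `0` for `n = 0`. -/
noncomputable def chordSlope (G : ℕ → ℝ) (a n : ℕ) : ℝ := (G (a + n) - G a) / n

section ChordSlope

variable {G : ℕ → ℝ}

lemma chordSlope_nonneg (hG : Monotone G) (a n : ℕ) : 0 ≤ chordSlope G a n :=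
  div_nonneg (sub_nonneg.2 (hG (Nat.le_add_right a n))) n.cast_nonneg

lemma natCast_mul_chordSlope (a n : ℕ) : n * chordSlope G a n = G (a + n) - G a := by
  rcases n.eq_zero_or_pos with rfl | hn
  · simp
  · exact mul_div_cancel₀ _ (by positivity)

lemma tendsto_chordSlope (hlim : Tendsto (fun n => G (n + 1) - G n) atTop (𝓝 0)) (a : ℕ) :
    Tendsto (chordSlope G a) atTop (𝓝 0) := by
  refine (hlim.comp (tendsto_add_atTop_nat a)).cesaro.congr fun n => ?_
  have := sum_range_sub (fun i => G (a + i)) n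
  rw [add_zero] at this
  rw [chordSlope, div_eq_inv_mul, ← this]
  exact congrArg _ (sum_congr rfl fun i _ => by simp only [Function.comp_apply]; ring_nf)

lemma exists_forall_le_of_tendsto_zero {f : ℕ → ℝ} (hf0 : ∀ n, 0 ≤ f n)
    (hf : Tendsto f atTop (𝓝 0)) : ∃ n, ∀ m, f m ≤ f n := by
  by_cases h : ∃ n, 0 < f n
  · obtain ⟨n, hn⟩ := h
    exact continuous_of_discreteTopology.exists_forall_ge' n
      (cocompact_eq_atTop (α := ℕ) ▸ hf.eventually (ge_mem_nhds hn))
  · push Not at h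
    exact ⟨0, fun m => (h m).trans (hf0 0)⟩

lemma exists_chordSlope_max (hG : Monotone G)
    (hlim : Tendsto (fun n => G (n + 1) - G n) atTop (𝓝 0)) (a : ℕ) :
    ∃ ℓ, 0 < ℓ ∧ ∀ n, chordSlope G a n ≤ chordSlope G a ℓ := by
  obtain ⟨m, hm⟩ := exists_forall_le_of_tendsto_zero (fun m => chordSlope_nonneg hG a (m + 1))
    ((tendsto_chordSlope hlim a).comp (tendsto_add_atTop_nat 1))
  refine ⟨m + 1, m.succ_pos, fun n => ?_⟩
  rcases n with _ | n
  · simpa [chordSlope] using chordSlope_nonneg hG a (m + 1)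
  · exact hm n

lemma chordSlope_le_of_chordSlope_add_le {a ℓ ℓ' : ℕ} (hℓ : 0 < ℓ) (hℓ' : 0 < ℓ')
    (h : chordSlope G a (ℓ + ℓ') ≤ chordSlope G a ℓ) :
    chordSlope G (a + ℓ) ℓ' ≤ chordSlope G a ℓ := by
  unfold chordSlope at h ⊢
  rw [div_le_div_iff₀ (by positivity) (by positivity)] at h ⊢
  rw [← add_assoc] at h
  push_cast at h
  linarith

end ChordSlope

lemma Antitone.tendsto_zero_of_partialSums {ρ : ℕ → ℝ} (hρ : Antitone ρ) (hρ0 : ∀ n, 0 ≤ ρ n)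
    {u : ℕ → ℕ} (hu : StrictMono u)
    (hlim : Tendsto (fun k => (∑ j ∈ range (u k), ρ j) / u k) atTop (𝓝 0)) :
    Tendsto ρ atTop (𝓝 0) := by
  rw [tendsto_iff_tendsto_subseq_of_antitone hρ hu.tendsto_atTop]
  refine squeeze_zero' (Eventually.of_forall fun k => hρ0 _) ?_ hlim
  filter_upwards [eventually_gt_atTop 0] with k hk
  rw [Function.comp_apply, le_div_iff₀ (Nat.cast_pos.2 (hk.trans_le hu.le_apply))]
  calc ρ (u k) * u k = ∑ _j ∈ range (u k), ρ (u k) := by simp [mul_comm]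
    _ ≤ ∑ j ∈ range (u k), ρ j := sum_le_sum fun j hj => hρ (mem_range.1 hj).le

theorem exists_antitone_partialSums_majorant {ξ G : ℕ → ℝ} (hξ : Antitone ξ) (hG : Monotone G)
    (hG0 : G 0 = 0) (hξG : ∀ n, ξ n ≤ G (n + 1) - G n)
    (hlim : Tendsto (fun n => G (n + 1) - G n) atTop (𝓝 0)) :
    ∃ ρ : ℕ → ℝ, Antitone ρ ∧ Tendsto ρ atTop (𝓝 0) ∧ (∀ n, ξ n ≤ ρ n) ∧
      (∀ n, G n ≤ ∑ j ∈ range n, ρ j) ∧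
      ∃ u : ℕ → ℕ, StrictMono u ∧ ∀ k, ∑ j ∈ range (u k), ρ j = G (u k) := by
  choose ℓ hℓ0 hℓmax using exists_chordSlope_max hG hlim
  set u : ℕ → ℕ := fun k => (fun a => a + ℓ a)^[k] 0
  have hu_succ : ∀ k, u (k + 1) = u k + ℓ (u k) := fun k => Function.iterate_succ_apply' _ k 0
  have hu : StrictMono u := strictMono_nat_of_lt_succ fun k => by
    rw [hu_succ]
    exact Nat.lt_add_of_pos_right (hℓ0 _)
  set σ := fun k => chordSlope G (u k) (ℓ (u k)) with hσ_def
  have hσ : Antitone σ := antitone_nat_of_succ_le fun k => by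
    simp only [hσ_def, hu_succ]
    exact chordSlope_le_of_chordSlope_add_le (hℓ0 _) (hℓ0 _) (hℓmax _ _)
  set ρ := fun n => σ (blockIndex u n) with hρ_def
  have hρblock : ∀ k n, u k ≤ n → n < u (k + 1) → ρ n = σ k := fun k n h₁ h₂ => by
    simp only [hρ_def, blockIndex_eq hu h₁ h₂]
  have hρ : Antitone ρ := hσ.comp_monotone (blockIndex_mono u)
  have hξρ : ∀ n, ξ n ≤ ρ n := by
    intro n
    obtain ⟨k, h₁, h₂⟩ := exists_block hu rfl n
    rw [hρblock k n h₁ h₂]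
    calc ξ n ≤ ξ (u k) := hξ h₁
      _ ≤ chordSlope G (u k) 1 := by simpa [chordSlope] using hξG (u k)
      _ ≤ σ k := hℓmax _ 1
  have hsum_block : ∀ k d, d ≤ ℓ (u k) →
      ∑ j ∈ range (u k + d), ρ j - ∑ j ∈ range (u k), ρ j = d * σ k := by
    intro k d hd
    rw [sum_range_add, add_sub_cancel_left, sum_congr rfl fun i hi =>
      hρblock k _ (Nat.le_add_right _ _) (by rw [hu_succ]; have := mem_range.1 hi; omega)]
    simp
  obtain ⟨hGρ, hρu⟩ := le_and_eq_of_blocks hu rfl (A := G) (B := fun n => ∑ j ∈ range n, ρ j)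
    (by simp [hG0])
    (fun k n h₁ h₂ => by
      obtain ⟨d, rfl⟩ := Nat.exists_eq_add_of_le h₁
      rw [hu_succ] at h₂
      simp only [hsum_block k d (by omega), ← natCast_mul_chordSlope]
      exact mul_le_mul_of_nonneg_left (hℓmax _ d) d.cast_nonneg)
    (fun k => by
      simp only [hu_succ, hsum_block k _ le_rfl, ← natCast_mul_chordSlope]
      rfl)
  have hcesaro : Tendsto (fun k => (∑ j ∈ range (u k), ρ j) / u k) atTop (𝓝 0) := by
    simp only [← hρu]
    simpa [Function.comp_def, chordSlope, hG0] using
      (tendsto_chordSlope hlim 0).comp hu.tendsto_atTop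
  exact ⟨ρ, hρ, hρ.tendsto_zero_of_partialSums (fun n => chordSlope_nonneg hG _ _) hu hcesaro,
    hξρ, hGρ, u, hu, fun k => (hρu k).symm⟩

lemma partialSups_succ_le_add {D : ℕ → ℝ} {n : ℕ} {c : ℝ} (hc : 0 ≤ c)
    (hD : D (n + 1) ≤ D n + c) : partialSups D (n + 1) ≤ partialSups D n + c := by
  rw [← Order.succ_eq_add_one, partialSups_succ]
  exact sup_le (le_add_of_nonneg_right hc) (hD.trans (by gcongr; exact le_partialSups D n))

lemma exists_ge_eq_add_of_eq_add_partialSups {X D P : ℕ → ℝ}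
    (hP : ∀ n, X n + partialSups D n ≤ P n) (hXP : ∀ m v, m ≤ v → X v - X m ≤ P v - P m)
    {b v : ℕ} (hb : IsRecord D b) (hbv : b ≤ v) (hv : P v = X v + partialSups D v) :
    ∃ m, b ≤ m ∧ P m = X m + D m := by
  set m := Nat.findGreatest (fun i => D i = partialSups D v) v
  obtain ⟨i, hiv, hi⟩ := exists_partialSups_eq D v
  have hm : D m = partialSups D v :=
    Nat.findGreatest_spec (P := fun i => D i = partialSups D v) hiv hi.symm
  have hmv : m ≤ v := Nat.findGreatest_le v
  have hbm : b ≤ m := by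
    by_contra! hmb
    refine hmb.not_ge (Nat.le_findGreatest hbv (le_antisymm (le_partialSups_of_le D hbv) ?_))
    exact hm ▸ hb m hmb.le
  have hDm : partialSups D m = D m :=
    le_antisymm (hm ▸ (partialSups D).monotone hmv) (le_partialSups D m)
  refine ⟨m, hbm, le_antisymm ?_ (hDm ▸ hP m)⟩
  linarith [hXP m v hmv]

theorem exists_majorant_of_frequently_isRecord {ξ η : ℕ → ℝ} (hξ : Antitone ξ)
    (hξ0 : ∀ n, 0 ≤ ξ n) (hξl : Tendsto ξ atTop (𝓝 0)) (hη0 : ∀ n, 0 ≤ η n)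
    (hηl : Tendsto η atTop (𝓝 0))
    (hrec : ∃ᶠ n in atTop, IsRecord (fun n => ∑ j ∈ range n, (η j - ξ j)) n) :
    ∃ ρ : ℕ → ℝ, Antitone ρ ∧ (∀ n, 0 ≤ ρ n) ∧ Tendsto ρ atTop (𝓝 0) ∧ (∀ n, ξ n ≤ ρ n) ∧
      (∀ n, ∑ j ∈ range n, η j ≤ ∑ j ∈ range n, ρ j) ∧
      ∃ mk : ℕ → ℕ, StrictMono mk ∧
        ∀ k, ∑ j ∈ range (mk k), η j = ∑ j ∈ range (mk k), ρ j := by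
  set X := fun n => ∑ j ∈ range n, ξ j
  set D := fun n => ∑ j ∈ range n, (η j - ξ j)
  have hH : ∀ n, ∑ j ∈ range n, η j = X n + D n := fun n => by simp [X, D, sum_sub_distrib]
  set G := fun n => X n + partialSups D n with hG_def
  have hΔG : ∀ n, ξ n ≤ G (n + 1) - G n ∧ G (n + 1) - G n ≤ ξ n + η n := by
    intro n
    have hX : X (n + 1) = X n + ξ n := sum_range_succ _ _
    have hD : D (n + 1) ≤ D n + η n := by
      simp only [D, sum_range_succ]
      linarith [hξ0 n]
    have hDm := (partialSups D).monotone n.le_succ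
    have hDm' := partialSups_succ_le_add (hη0 n) hD
    simp only [hG_def, hX]
    constructor <;> linarith
  obtain ⟨ρ, hρ, hρl, hξρ, hGρ, u, hu, hρu⟩ := exists_antitone_partialSums_majorant hξ
    (monotone_nat_of_le_succ fun n => by linarith [hξ0 n, (hΔG n).1]) (by simp [G, X, D])
    (fun n => (hΔG n).1)
    (squeeze_zero (fun n => (hξ0 n).trans (hΔG n).1) (fun n => (hΔG n).2)
      (by simpa using hξl.add hηl))
  refine ⟨ρ, hρ, fun n => (hξ0 n).trans (hξρ n), hρl, hξρ, fun n => ?_,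
    extraction_of_frequently_atTop (P := fun m => ∑ j ∈ range m, η j = ∑ j ∈ range m, ρ j)
      (frequently_atTop.2 fun B => ?_)⟩
  · rw [hH]
    exact (add_le_add_right (le_partialSups D n) _).trans (hGρ n)
  obtain ⟨b, hBb, hb⟩ := frequently_atTop.1 hrec B
  have hXρ : ∀ m v, m ≤ v → X v - X m ≤ ∑ j ∈ range v, ρ j - ∑ j ∈ range m, ρ j :=
    fun m v h => by
      simp only [X, ← sum_Ico_eq_sub _ h]
      exact sum_le_sum fun j _ => hξρ j
  obtain ⟨m, hbm, hm⟩ := exists_ge_eq_add_of_eq_add_partialSups hGρ hXρ hb hu.le_apply (hρu b)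
  exact ⟨m, hBb.trans hbm, by rw [hH, hm]⟩

theorem stmt8 (ξ η : ℕ → ℝ)
    (hξa : Antitone ξ) (hξ0 : ∀ n, 0 ≤ ξ n) (hξl : Tendsto ξ atTop (nhds 0))
    (hηa : Antitone η) (hη0 : ∀ n, 0 ≤ η n) (hηl : Tendsto η atTop (nhds 0)) :
    ((∃ nk : ℕ → ℕ, nk 0 = 0 ∧ StrictMono nk ∧
        ∀ k m, nk k ≤ m → m < nk (k + 1) →
          0 ≤ ∑ j ∈ Finset.Ico m (nk (k + 1)), (η j - ξ j)) ↔
      (∃ ζ : ℕ → ℝ, Antitone ζ ∧ (∀ n, 0 ≤ ζ n) ∧ Tendsto ζ atTop (nhds 0) ∧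
        (∀ n, ζ n ≤ η n) ∧
        (∀ n, ∑ j ∈ Finset.range n, ζ j ≤ ∑ j ∈ Finset.range n, ξ j) ∧
        ∃ mk : ℕ → ℕ, StrictMono mk ∧
          ∀ k, ∑ j ∈ Finset.range (mk k), ζ j = ∑ j ∈ Finset.range (mk k), ξ j)) ∧
    ((∃ nk : ℕ → ℕ, nk 0 = 0 ∧ StrictMono nk ∧
        ∀ k m, nk k ≤ m → m < nk (k + 1) →
          0 ≤ ∑ j ∈ Finset.Ico m (nk (k + 1)), (η j - ξ j)) ↔
      (∃ ρ : ℕ → ℝ, Antitone ρ ∧ (∀ n, 0 ≤ ρ n) ∧ Tendsto ρ atTop (nhds 0) ∧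
        (∀ n, ξ n ≤ ρ n) ∧
        (∀ n, ∑ j ∈ Finset.range n, η j ≤ ∑ j ∈ Finset.range n, ρ j) ∧
        ∃ mk : ℕ → ℕ, StrictMono mk ∧
          ∀ k, ∑ j ∈ Finset.range (mk k), η j = ∑ j ∈ Finset.range (mk k), ρ j)) := by
  have hrec := blockCondition_iff_frequently_isRecord (fun j => η j - ξ j)
  refine ⟨⟨fun ⟨nk, h0, hnk, hcond⟩ =>
      exists_truncation_of_blockCondition hξa hξ0 hηa hη0 hηl h0 hnk hcond, ?_⟩,
    ⟨fun h => exists_majorant_of_frequently_isRecord hξa hξ0 hξl hη0 hηl (hrec.1 h), ?_⟩⟩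
  · rintro ⟨ζ, -, -, -, hζη, hζξ, mk, hmk, heq⟩
    refine hrec.2 (frequently_isRecord_of_le (f := fun j => ζ j - ξ j)
      (fun j => sub_le_sub_right (hζη j) _) (fun n => ?_) hmk fun k => ?_)
    · rw [sum_sub_distrib, sub_nonpos]
      exact hζξ n
    · rw [sum_sub_distrib, heq k, sub_self]
  · rintro ⟨ρ, -, -, -, hξρ, hηρ, mk, hmk, heq⟩
    refine hrec.2 (frequently_isRecord_of_le (f := fun j => η j - ρ j)
      (fun j => sub_le_sub_left (hξρ j) _) (fun n => ?_) hmk fun k => ?_)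
    · rw [sum_sub_distrib, sub_nonpos]
      exact hηρ n
    · rw [sum_sub_distrib, heq k, sub_self]
end

section
/- If ξ and η are nonincreasing summable nonnegative sequences with ξ majorized at infinity by η (i.e., ∑_{j=n}^∞ ξ_j ≤ ∑_{j=n}^∞ η_j for all n ≥ 1), then there exists a nonincreasing nonnegative sequence ζ converging to 0 such that ξ ≼_∞ ζ (i.e., ξ ≺_∞ ζ and ∑_{j=1}^∞ ξ_j = ∑_{j=1}^∞ ζ_j) and ζ ≤ η pointwise. -/
open Finset Filter Topology

noncomputable def tail9 (f : ℕ → ℝ) (n : ℕ) : ℝ := ∑' j : ℕ, f (n + j)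

lemma tail9_summable {f : ℕ → ℝ} (hf : Summable f) (n : ℕ) :
    Summable (fun j => f (n + j)) := by
  have := (summable_nat_add_iff n).2 hf
  simpa [add_comm] using this

lemma tail9_shift {f : ℕ → ℝ} (hf : Summable f) (n : ℕ) :
    tail9 f n = f n + tail9 f (n + 1) := by
  have h := Summable.tsum_eq_zero_add (tail9_summable hf n)
  simp only [tail9]
  rw [h, Nat.add_zero]
  congr 1
  exact tsum_congr fun b => by congr 1; ring

lemma tail9_nonneg {f : ℕ → ℝ} (hf0 : ∀ n, 0 ≤ f n) (hf : Summable f) (n : ℕ) :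
    0 ≤ tail9 f n :=
  tsum_nonneg fun j => hf0 _

lemma tail9_succ_le {f : ℕ → ℝ} (hf0 : ∀ n, 0 ≤ f n) (hf : Summable f) (n : ℕ) :
    tail9 f (n + 1) ≤ tail9 f n := by
  rw [tail9_shift hf n]
  linarith [hf0 n]

lemma tail9_tendsto {f : ℕ → ℝ} (hf : Summable f) :
    Tendsto (tail9 f) atTop (𝓝 0) := by
  have := tendsto_sum_nat_add f
  convert this using 2 with n
  simp [tail9, add_comm]

noncomputable def gfun9 (ξ η : ℕ → ℝ) : ℕ → ℝ
  | 0 => tail9 ξ 0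
  | n + 1 => max (gfun9 ξ η n - η n) (tail9 ξ (n + 1))

theorem stmt9 (ξ η : ℕ → ℝ)
    (hξa : Antitone ξ) (hξ0 : ∀ n, 0 ≤ ξ n) (hξs : Summable ξ)
    (hηa : Antitone η) (hη0 : ∀ n, 0 ≤ η n) (hηs : Summable η)
    (hmaj : ∀ n, ∑' j : ℕ, ξ (n + j) ≤ ∑' j : ℕ, η (n + j)) :
    ∃ ζ : ℕ → ℝ, Antitone ζ ∧ (∀ n, 0 ≤ ζ n) ∧ Tendsto ζ atTop (nhds 0) ∧
      Summable ζ ∧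
      (∀ n, ∑' j : ℕ, ξ (n + j) ≤ ∑' j : ℕ, ζ (n + j)) ∧
      (∑' j : ℕ, ξ j) = (∑' j : ℕ, ζ j) ∧
      (∀ n, ζ n ≤ η n) := by
  set g := gfun9 ξ η with hg
  have hmaj' : ∀ n, tail9 ξ n ≤ tail9 η n := fun n => hmaj n
  -- g n ≥ tail ξ n
  have hgξ : ∀ n, tail9 ξ n ≤ g n := by
    intro n
    cases n with
    | zero => exact le_of_eq rfl
    | succ m => exact le_max_right _ _
  -- g n ≤ tail η n
  have hgη : ∀ n, g n ≤ tail9 η n := by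
    intro n
    induction n with
    | zero => exact hmaj' 0
    | succ m ih =>
      have h1 : g m - η m ≤ tail9 η (m + 1) := by
        have := tail9_shift hηs m
        linarith
      exact max_le h1 (hmaj' (m + 1))
  -- g is antitone (succ)
  have hgmono : ∀ n, g (n + 1) ≤ g n := by
    intro n
    apply max_le
    · linarith [hη0 n]
    · exact le_trans (tail9_succ_le hξ0 hξs n) (hgξ n)
  set ζ : ℕ → ℝ := fun n => g n - g (n + 1) with hζ
  have hζ0 : ∀ n, 0 ≤ ζ n := fun n => by simp [hζ]; linarith [hgmono n]
  have hζη : ∀ n, ζ n ≤ η n := by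
    intro n
    have : g n - η n ≤ g (n + 1) := le_max_left _ _
    simp only [hζ]; linarith
  -- antitone
  have hζa : Antitone ζ := by
    apply antitone_nat_of_succ_le
    intro n
    simp only [hζ]
    -- need g(n+1) - g(n+2) ≤ g n - g(n+1), i.e. 2 g(n+1) ≤ g n + g(n+2)
    have h2 : g (n + 1) = max (g n - η n) (tail9 ξ (n + 1)) := rfl
    rcases max_cases (g n - η n) (tail9 ξ (n + 1)) with ⟨he, _⟩ | ⟨he, _⟩
    · -- case A : g(n+1) = g n - η n
      have h3 : g (n + 1) - η (n + 1) ≤ g (n + 2) := le_max_left _ _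
      have h4 : η (n + 1) ≤ η n := hηa (by omega)
      rw [h2, he]
      rw [h2, he] at h3
      linarith
    · -- case B : g(n+1) = tail ξ (n+1)
      have h3 : tail9 ξ (n + 2) ≤ g (n + 2) := le_max_right _ _
      have h5 : tail9 ξ (n + 1) = ξ (n + 1) + tail9 ξ (n + 2) := tail9_shift hξs (n + 1)
      have h6 : tail9 ξ n = ξ n + tail9 ξ (n + 1) := tail9_shift hξs n
      have h7 : tail9 ξ n ≤ g n := hgξ n
      have h8 : ξ (n + 1) ≤ ξ n := hξa (by omega)
      rw [h2, he]
      linarith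
  -- summable
  have hζs : Summable ζ := by
    apply Summable.of_nonneg_of_le hζ0 hζη hηs
  -- telescoping and tail identity
  have htel : ∀ n k, ∑ j ∈ Finset.range k, ζ (n + j) = g n - g (n + k) := by
    intro n k
    induction k with
    | zero => simp
    | succ m ih =>
      rw [Finset.sum_range_succ, ih]
      have : n + m + 1 = n + (m + 1) := by omega
      simp only [hζ, this]
      ring
  have hgto : Tendsto g atTop (𝓝 0) := by
    have h1 := tail9_tendsto hξs
    have h2 := tail9_tendsto hηs
    exact tendsto_of_tendsto_of_tendsto_of_le_of_le h1 h2 hgξ hgη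
  have htail : ∀ n, ∑' j : ℕ, ζ (n + j) = g n := by
    intro n
    have hs : Summable fun j => ζ (n + j) := tail9_summable hζs n
    have h1 : Tendsto (fun k => ∑ j ∈ Finset.range k, ζ (n + j)) atTop
        (𝓝 (∑' j : ℕ, ζ (n + j))) := hs.hasSum.tendsto_sum_nat
    have h2 : Tendsto (fun k => g n - g (n + k)) atTop (𝓝 (g n - 0)) := by
      apply Tendsto.sub tendsto_const_nhds
      have := (tendsto_add_atTop_iff_nat n).2 hgto
      simpa [add_comm] using this
    have h3 : Tendsto (fun k => ∑ j ∈ Finset.range k, ζ (n + j)) atTop (𝓝 (g n - 0)) := by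
      simpa only [htel] using h2
    have := tendsto_nhds_unique h1 h3
    simpa using this
  refine ⟨ζ, hζa, hζ0, ?_, hζs, ?_, ?_, hζη⟩
  · -- tendsto 0
    have hη0' : Tendsto η atTop (𝓝 0) := hηs.tendsto_atTop_zero
    exact tendsto_of_tendsto_of_tendsto_of_le_of_le tendsto_const_nhds hη0' hζ0 hζη
  · intro n
    rw [htail n]
    exact hgξ n
  · have h0 : (∑' j : ℕ, ζ j) = ∑' j : ℕ, ζ (0 + j) := by simp
    rw [h0, htail 0]
    simp [hg, gfun9, tail9]
end

section
/- If ξ and η are nonincreasing summable nonnegative sequences with ξ ≺_∞ η, then there exists a nonincreasing nonnegative sequence ρ with ξ ≤ ρ pointwise and ρ ≼_∞ η (i.e., ρ ≺_∞ η with ∑_{j=1}^∞ ρ_j = ∑_{j=1}^∞ η_j). In fact ρ := ⟨ξ_1 + ∑_{j=1}^∞ (η_j − ξ_j), ξ_2, ξ_3, …⟩ works. -/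
open Finset Filter Topology

theorem stmt10 (ξ η : ℕ → ℝ)
    (hξa : Antitone ξ) (hξ0 : ∀ n, 0 ≤ ξ n) (hξs : Summable ξ)
    (hηa : Antitone η) (hη0 : ∀ n, 0 ≤ η n) (hηs : Summable η)
    (hmaj : ∀ n, ∑' j : ℕ, ξ (n + j) ≤ ∑' j : ℕ, η (n + j))
    (ρ : ℕ → ℝ)
    (hρ : ρ = fun i => if i = 0 then ξ 0 + ∑' j : ℕ, (η j - ξ j) else ξ i) :
    Antitone ρ ∧ (∀ i, 0 ≤ ρ i) ∧ (∀ i, ξ i ≤ ρ i) ∧ Summable ρ ∧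
      (∀ n, ∑' j : ℕ, ρ (n + j) ≤ ∑' j : ℕ, η (n + j)) ∧
      (∑' j : ℕ, ρ j) = (∑' j : ℕ, η j) := by
  have hδ : ∑' j, (η j - ξ j) = (∑' j, η j) - ∑' j, ξ j := Summable.tsum_sub hηs hξs
  have h0 : ∑' j, ξ j ≤ ∑' j, η j := by simpa using hmaj 0
  have hδ0 : 0 ≤ ∑' j : ℕ, (η j - ξ j) := by rw [hδ]; linarith
  set δ := ∑' j : ℕ, (η j - ξ j) with hδdef
  have hg : HasSum (fun i : ℕ => if i = 0 then δ else 0) δ := hasSum_ite_eq 0 δ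
  have hρeq : ρ = fun i => ξ i + (if i = 0 then δ else 0) := by
    rw [hρ]; funext i
    by_cases h : i = 0 <;> simp [h]
  have hρs : Summable ρ := by
    rw [hρeq]; exact hξs.add hg.summable
  have hρtsum : (∑' j, ρ j) = ∑' j, η j := by
    rw [hρeq, Summable.tsum_add hξs hg.summable, hg.tsum_eq]
    rw [hδdef] at hδ ⊢; rw [hδ]; ring
  refine ⟨?_, ?_, ?_, hρs, ?_, hρtsum⟩
  · apply antitone_nat_of_succ_le
    intro n
    rw [hρ]
    cases n with
    | zero => simp; nlinarith [hξa (Nat.zero_le 1), hδ0]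
    | succ k => simp; exact hξa (by omega)
  · intro i
    rw [hρ]
    by_cases h : i = 0 <;> simp [h]
    · linarith [hξ0 0]
    · exact hξ0 i
  · intro i
    rw [hρ]
    by_cases h : i = 0 <;> simp [h]
    linarith
  · intro n
    cases n with
    | zero =>
      simp only [Nat.zero_add, zero_add]
      rw [hρtsum]
    | succ k =>
      have : (fun j => ρ (k + 1 + j)) = fun j => ξ (k + 1 + j) := by
        funext j; rw [hρ]; simp [Nat.add_assoc]
      rw [this]; exact hmaj (k + 1)
end

section
/- Let ξ, η be finite nonincreasing sequences of nonnegative reals of length N with ξ majorized at infinity by η, i.e., ∑_{j=n}^N ξ_j ≤ ∑_{j=n}^N η_j for all 1 ≤ n ≤ N. Then there exists a nonincreasing nonnegative sequence ζ of length N with ξ ≼_∞ ζ (i.e., ξ ≺_∞ ζ and ∑_{j=1}^N ξ_j = ∑_{j=1}^N ζ_j) and ζ_j ≤ η_j for all j. -/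
/-!
Truncate η at a level t: ζ j = min (η j) t. The total ∑ min (η j) t is continuous in t, vanishes
at t = 0 and equals ∑ η j for t large, so by the intermediate value theorem some t gives
∑ ζ = ∑ ξ. For a tail starting at n there are two cases. If t < ξ n, then ζ ≤ ξ on the head
before n, and equality of the totals yields the tail inequality. If ξ n ≤ t, induct downwards
on n: past the point where η drops below t the tails of ζ and η agree, and before it
ζ n = t ≥ ξ n.
-/

open Finset

theorem exists_sum_min_eq {ι : Type*} [Fintype ι] {η : ι → ℝ} (hη : ∀ j, 0 ≤ η j) {s : ℝ}
    (hs₀ : 0 ≤ s) (hs : s ≤ ∑ j, η j) : ∃ t, 0 ≤ t ∧ ∑ j, min (η j) t = s := by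
  have hcont : Continuous fun t ↦ ∑ j, min (η j) t := by fun_prop
  have h_zero : ∑ j, min (η j) 0 = 0 := sum_eq_zero fun j _ ↦ min_eq_right (hη j)
  have h_total : ∑ j, min (η j) (∑ i, η i) = ∑ j, η j :=
    sum_congr rfl fun j _ ↦ min_eq_left (single_le_sum (fun i _ ↦ hη i) (mem_univ j))
  obtain ⟨t, ht, hts⟩ := intermediate_value_Icc (sum_nonneg fun j _ ↦ hη j) hcont.continuousOn
    (show s ∈ Set.Icc _ _ by rw [h_zero, h_total]; exact ⟨hs₀, hs⟩)
  exact ⟨t, ht.1, hts⟩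

section LinearOrder

variable {ι : Type*} [LinearOrder ι] [LocallyFiniteOrderTop ι]

theorem sum_Ici_le_sum_Ici_of_sum_eq [Fintype ι] {ξ ζ : ι → ℝ} (hsum : ∑ j, ξ j = ∑ j, ζ j)
    {n : ι} (hhead : ∀ j < n, ζ j ≤ ξ j) : ∑ j ∈ Ici n, ξ j ≤ ∑ j ∈ Ici n, ζ j := by
  have hcompl : ∑ j ∈ (Ici n)ᶜ, ζ j ≤ ∑ j ∈ (Ici n)ᶜ, ξ j :=
    sum_le_sum fun j hj ↦ hhead j (by simpa using hj)
  linarith [sum_compl_add_sum (Ici n) ξ, sum_compl_add_sum (Ici n) ζ]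

theorem sum_Ici_min_eq_of_le {η : ι → ℝ} (hη : Antitone η) {n : ι} {t : ℝ} (hn : η n ≤ t) :
    ∑ j ∈ Ici n, min (η j) t = ∑ j ∈ Ici n, η j :=
  sum_congr rfl fun _ hj ↦ min_eq_left ((hη (mem_Ici.1 hj)).trans hn)

theorem sum_Ici_le_sum_Ici_min [SuccOrder ι] [WellFoundedGT ι] {ξ η : ι → ℝ} (hξ : Antitone ξ)
    (hη : Antitone η) (hmaj : ∀ n, ∑ j ∈ Ici n, ξ j ≤ ∑ j ∈ Ici n, η j) {t : ℝ} (n : ι)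
    (hn : ξ n ≤ t) : ∑ j ∈ Ici n, ξ j ≤ ∑ j ∈ Ici n, min (η j) t := by
  induction n using WellFoundedGT.induction with
  | _ n ih =>
    rcases le_or_gt (η n) t with hηt | htη
    · exact (sum_Ici_min_eq_of_le hη hηt).symm ▸ hmaj n
    have htail : ∑ j ∈ Ioi n, ξ j ≤ ∑ j ∈ Ioi n, min (η j) t := by
      by_cases hmax : IsMax n
      · simp [Ioi_eq_empty.2 hmax]
      · have hsucc := Order.lt_succ_of_not_isMax hmax
        rw [← Ici_succ_eq_Ioi_of_not_isMax hmax]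
        exact ih _ hsucc ((hξ hsucc.le).trans hn)
    rw [Ici_eq_cons_Ioi, sum_cons, sum_cons]
    exact add_le_add (le_min_iff.2 ⟨hn.trans htη.le, hn⟩) htail

end LinearOrder

theorem stmt11 (N : ℕ) (ξ η : Fin N → ℝ)
    (hξa : Antitone ξ) (hξ0 : ∀ j, 0 ≤ ξ j)
    (hηa : Antitone η) (hη0 : ∀ j, 0 ≤ η j)
    (hmaj : ∀ n : Fin N, ∑ j ∈ Finset.Ici n, ξ j ≤ ∑ j ∈ Finset.Ici n, η j) :
    ∃ ζ : Fin N → ℝ, Antitone ζ ∧ (∀ j, 0 ≤ ζ j) ∧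
      (∀ n : Fin N, ∑ j ∈ Finset.Ici n, ξ j ≤ ∑ j ∈ Finset.Ici n, ζ j) ∧
      (∑ j, ξ j) = (∑ j, ζ j) ∧
      (∀ j, ζ j ≤ η j) := by
  have htotal : ∑ j, ξ j ≤ ∑ j, η j := by
    rcases N with _ | M
    · simp
    · simpa using hmaj 0
  obtain ⟨t, ht, hsum⟩ := exists_sum_min_eq hη0 (sum_nonneg fun j _ ↦ hξ0 j) htotal
  refine ⟨fun j ↦ min (η j) t, fun i j hij ↦ min_le_min_right t (hηa hij),
    fun j ↦ le_min (hη0 j) ht, fun n ↦ ?_, hsum.symm, fun j ↦ min_le_left _ _⟩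
  rcases lt_or_ge t (ξ n) with htξ | hξt
  · exact sum_Ici_le_sum_Ici_of_sum_eq hsum.symm fun j hj ↦
      (min_le_right _ _).trans (htξ.le.trans (hξa hj.le))
  · exact sum_Ici_le_sum_Ici_min hξa hηa hmaj n hξt
end

section
/- For summable sequences ξ, η ∈ (ℓ¹)^* (nonincreasing, nonnegative), the following are equivalent: (a) ξ ≺ η and ∑_{j=1}^∞ ξ_j = ∑_{j=1}^∞ η_j; (b) ξ ≼ η (i.e., ξ ≺ η and liminf_n ∑_{j=1}^n (η_j − ξ_j) = 0); (c) η ≼_∞ ξ (i.e., ∑_{j=n}^∞ η_j ≤ ∑_{j=n}^∞ ξ_j for all n and the total sums are equal). -/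
open Finset Filter Topology

theorem stmt12 (ξ η : ℕ → ℝ)
    (hξa : Antitone ξ) (hξ0 : ∀ n, 0 ≤ ξ n) (hξs : Summable ξ)
    (hηa : Antitone η) (hη0 : ∀ n, 0 ≤ η n) (hηs : Summable η) :
    (((∀ n, ∑ j ∈ Finset.range n, ξ j ≤ ∑ j ∈ Finset.range n, η j) ∧
        (∑' j : ℕ, ξ j) = (∑' j : ℕ, η j)) ↔
      ((∀ n, ∑ j ∈ Finset.range n, ξ j ≤ ∑ j ∈ Finset.range n, η j) ∧
        Filter.liminf (fun n => ∑ j ∈ Finset.range n, (η j - ξ j)) atTop = 0)) ∧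
    (((∀ n, ∑ j ∈ Finset.range n, ξ j ≤ ∑ j ∈ Finset.range n, η j) ∧
        Filter.liminf (fun n => ∑ j ∈ Finset.range n, (η j - ξ j)) atTop = 0) ↔
      ((∀ n, ∑' j : ℕ, η (n + j) ≤ ∑' j : ℕ, ξ (n + j)) ∧
        (∑' j : ℕ, η j) = (∑' j : ℕ, ξ j))) := by
  -- partial sums of η - ξ converge to ∑'η - ∑'ξ
  have htend : Tendsto (fun n => ∑ j ∈ Finset.range n, (η j - ξ j)) atTop
      (𝓝 ((∑' j, η j) - ∑' j, ξ j)) := by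
    have := (hηs.hasSum.sub hξs.hasSum).tendsto_sum_nat
    simpa using this
  have hliminf : Filter.liminf (fun n => ∑ j ∈ Finset.range n, (η j - ξ j)) atTop
      = (∑' j, η j) - ∑' j, ξ j := htend.liminf_eq
  have hiff : (Filter.liminf (fun n => ∑ j ∈ Finset.range n, (η j - ξ j)) atTop = 0)
      ↔ (∑' j, ξ j) = (∑' j, η j) := by
    rw [hliminf, sub_eq_zero, eq_comm]
  -- tail sums
  have htailη : ∀ n, ∑' j : ℕ, η (n + j) = (∑' j, η j) - ∑ j ∈ Finset.range n, η j := by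
    intro n
    have := Summable.sum_add_tsum_nat_add n hηs
    have h2 : ∑' j : ℕ, η (n + j) = ∑' j : ℕ, η (j + n) := by
      congr 1; funext j; rw [Nat.add_comm]
    linarith
  have htailξ : ∀ n, ∑' j : ℕ, ξ (n + j) = (∑' j, ξ j) - ∑ j ∈ Finset.range n, ξ j := by
    intro n
    have := Summable.sum_add_tsum_nat_add n hξs
    have h2 : ∑' j : ℕ, ξ (n + j) = ∑' j : ℕ, ξ (j + n) := by
      congr 1; funext j; rw [Nat.add_comm]
    linarith
  constructor
  · exact and_congr_right (fun _ => hiff.symm)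
  · constructor
    · rintro ⟨hpre, hlim⟩
      have hsum := hiff.mp hlim
      refine ⟨fun n => ?_, hsum.symm⟩
      rw [htailη n, htailξ n, hsum]
      linarith [hpre n]
    · rintro ⟨htail, hsum⟩
      refine ⟨fun n => ?_, hiff.mpr hsum.symm⟩
      have := htail n
      rw [htailη n, htailξ n, hsum] at this
      linarith
end

section
/- If ξ, η are nonincreasing nonnegative sequences converging to 0 and P is a substochastic matrix (nonnegative entries, all row and column sums ≤ 1) with ξ = Pη (entrywise: ξ_i = ∑_j P_{ij} η_j), and if additionally P is column-stochastic (all column sums equal 1) and ξ is summable, then η is summable and ξ ≼ η (ξ ≺ η with equal total sums). -/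
open Finset Filter Topology

theorem stmt15 (ξ η : ℕ → ℝ)
    (hξa : Antitone ξ) (hξ0 : ∀ n, 0 ≤ ξ n) (hξl : Tendsto ξ atTop (nhds 0))
    (hηa : Antitone η) (hη0 : ∀ n, 0 ≤ η n) (hηl : Tendsto η atTop (nhds 0))
    (P : ℕ → ℕ → ℝ)
    (hP0 : ∀ i j, 0 ≤ P i j)
    (hProw : ∀ i n, ∑ j ∈ Finset.range n, P i j ≤ 1)
    (hPcolle : ∀ j n, ∑ i ∈ Finset.range n, P i j ≤ 1)
    (hPcol : ∀ j, ∑' i : ℕ, P i j = 1)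
    (hPη : ∀ i, ξ i = ∑' j : ℕ, P i j * η j)
    (hξs : Summable ξ) :
    Summable η ∧
    (∀ n, ∑ j ∈ Finset.range n, ξ j ≤ ∑ j ∈ Finset.range n, η j) ∧
    (∑' j : ℕ, ξ j) = (∑' j : ℕ, η j) := by
  -- basic summability facts
  have hrow : ∀ i, Summable (fun j => P i j) := fun i =>
    summable_of_sum_range_le (fun j => hP0 i j) (hProw i)
  have hcolsum : ∀ j, Summable (fun i => P i j) := fun j =>
    summable_of_sum_range_le (fun i => hP0 i j) (fun n => hPcolle j n)
  have hPηs : ∀ i, Summable (fun j => P i j * η j) := by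
    intro i
    refine Summable.of_nonneg_of_le (fun j => mul_nonneg (hP0 i j) (hη0 j))
      (fun j => ?_) ((hrow i).mul_right (η 0))
    exact mul_le_mul_of_nonneg_left (hηa (Nat.zero_le j)) (hP0 i j)
  -- partial sums of η are bounded by ∑' ξ
  have hηbound : ∀ n, ∑ j ∈ Finset.range n, η j ≤ ∑' i, ξ i := by
    intro n
    have h1 : ∀ j, η j = ∑' i, P i j * η j := by
      intro j
      rw [tsum_mul_right, hPcol j, one_mul]
    have hsw : ∑ j ∈ Finset.range n, ∑' i, P i j * η j
        = ∑' i, ∑ j ∈ Finset.range n, P i j * η j :=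
      (Summable.tsum_finsetSum (fun j _ => (hcolsum j).mul_right (η j))).symm
    calc ∑ j ∈ Finset.range n, η j
        = ∑ j ∈ Finset.range n, ∑' i, P i j * η j :=
          Finset.sum_congr rfl (fun j _ => h1 j)
      _ = ∑' i, ∑ j ∈ Finset.range n, P i j * η j := hsw
      _ ≤ ∑' i, ξ i := by
          refine Summable.tsum_le_tsum (fun i => ?_)
            (summable_sum (fun j _ => (hcolsum j).mul_right (η j))) hξs
          rw [hPη i]
          exact Summable.sum_le_tsum (Finset.range n)
            (fun j _ => mul_nonneg (hP0 i j) (hη0 j)) (hPηs i)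
  have hηs : Summable η := summable_of_sum_range_le hη0 hηbound
  -- the partial sum inequality
  have part2 : ∀ n, ∑ j ∈ Finset.range n, ξ j ≤ ∑ j ∈ Finset.range n, η j := by
    intro n
    set c : ℕ → ℝ := fun j => ∑ i ∈ Finset.range n, P i j with hc
    have hc0 : ∀ j, 0 ≤ c j := fun j =>
      Finset.sum_nonneg (fun i _ => hP0 i j)
    have hc1 : ∀ j, c j ≤ 1 := fun j => hPcolle j n
    have hcs : Summable c := summable_sum (fun i _ => hrow i)
    have hcle : ∑' j, c j ≤ (n : ℝ) := by
      have : ∑' j, c j = ∑ i ∈ Finset.range n, ∑' j, P i j :=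
        Summable.tsum_finsetSum (fun i _ => hrow i)
      rw [this]
      calc ∑ i ∈ Finset.range n, ∑' j, P i j
          ≤ ∑ i ∈ Finset.range n, (1 : ℝ) :=
            Finset.sum_le_sum (fun i _ =>
              Summable.tsum_le_of_sum_range_le (hrow i) (hProw i))
        _ = (n : ℝ) := by simp
    have hcη : Summable (fun j => c j * η j) := by
      refine Summable.of_nonneg_of_le (fun j => mul_nonneg (hc0 j) (hη0 j))
        (fun j => ?_) (hcs.mul_right (η 0))
      exact mul_le_mul_of_nonneg_left (hηa (Nat.zero_le j)) (hc0 j)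
    have heq : ∑ i ∈ Finset.range n, ξ i = ∑' j, c j * η j := by
      have : ∑ i ∈ Finset.range n, ξ i
          = ∑' j, ∑ i ∈ Finset.range n, P i j * η j := by
        rw [Finset.sum_congr rfl (fun i _ => hPη i)]
        exact (Summable.tsum_finsetSum (fun i _ => hPηs i)).symm
      rw [this]
      congr 1
      funext j
      rw [hc, ← Finset.sum_mul]
    -- tail decompositions
    have hdecη := Summable.sum_add_tsum_nat_add (f := fun j => c j * η j) n hcη
    have hdecc := Summable.sum_add_tsum_nat_add (f := c) n hcs
    set A := ∑ j ∈ Finset.range n, c j * η j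
    set B := ∑ j ∈ Finset.range n, c j
    set T := ∑' k, c (k + n) * η (k + n)
    set S := ∑' k, c (k + n)
    have hTS : T ≤ S * η n := by
      have : S * η n = ∑' k, c (k + n) * η n := (tsum_mul_right).symm
      rw [this]
      refine Summable.tsum_le_tsum (fun k => ?_) (hcη.comp_injective (add_left_injective n))
        ((hcs.comp_injective (add_left_injective n)).mul_right (η n))
      exact mul_le_mul_of_nonneg_left (hηa (Nat.le_add_left n k)) (hc0 (k + n))
    have hS : S ≤ (n : ℝ) - B := by
      have : B + S = ∑' j, c j := hdecc
      linarith
    have hSnonneg : 0 ≤ S := tsum_nonneg (fun k => hc0 (k + n))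
    have key : ((n : ℝ) - B) * η n ≤ ∑ j ∈ Finset.range n, (1 - c j) * η j := by
      have h1 : ((n : ℝ) - B) * η n = ∑ j ∈ Finset.range n, (1 - c j) * η n := by
        rw [← Finset.sum_mul, Finset.sum_sub_distrib, Finset.sum_const,
          Finset.card_range, nsmul_eq_mul, mul_one]
      rw [h1]
      refine Finset.sum_le_sum (fun j hj => ?_)
      refine mul_le_mul_of_nonneg_left (hηa (le_of_lt (Finset.mem_range.mp hj))) ?_
      linarith [hc1 j]
    have hsplit : ∑ j ∈ Finset.range n, (1 - c j) * η j
        = ∑ j ∈ Finset.range n, η j - A := by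
      rw [← Finset.sum_sub_distrib]
      congr 1
      funext j
      ring
    have hSmul : S * η n ≤ ((n : ℝ) - B) * η n :=
      mul_le_mul_of_nonneg_right hS (hη0 n)
    have htsum : A + T = ∑' j, c j * η j := hdecη
    rw [heq]
    nlinarith [hη0 n]
  refine ⟨hηs, part2, le_antisymm ?_ ?_⟩
  · refine Summable.tsum_le_of_sum_range_le hξs (fun n => ?_)
    exact (part2 n).trans (Summable.sum_le_tsum (Finset.range n) (fun j _ => hη0 j) hηs)
  · exact Summable.tsum_le_of_sum_range_le hηs hηbound
end

section
/- Let ξ, η be nonincreasing nonnegative sequences converging to 0 and let P be an infinite substochastic matrix (nonnegative entries with all row and column sums bounded by 1) such that ξ_i = ∑_{j=1}^∞ P_{ij} η_j for all i. Then ξ ≺ η, i.e., ∑_{j=1}^n ξ_j ≤ ∑_{j=1}^n η_j for all n. -/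
open Finset Filter Topology

/-- Key finite lemma: if `0 ≤ c j ≤ 1` and all partial sums of `c` are at most `n`,
and `η` is antitone nonnegative, then `∑_{j<N} c j * η j ≤ ∑_{j<n} η j`. -/
lemma aux_sum_le (η : ℕ → ℝ) (hηa : Antitone η) (hη0 : ∀ n, 0 ≤ η n)
    (c : ℕ → ℝ) (hc0 : ∀ j, 0 ≤ c j) (hc1 : ∀ j, c j ≤ 1) (n : ℕ)
    (hcn : ∀ N, ∑ j ∈ Finset.range N, c j ≤ (n : ℝ)) :
    ∀ N, ∑ j ∈ Finset.range N, c j * η j ≤ ∑ j ∈ Finset.range n, η j := by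
  have key : ∀ M : ℕ, ∑ j ∈ Finset.range (n + M), c j * η j
      + ((n : ℝ) - ∑ j ∈ Finset.range (n + M), c j) * η (n + M)
      ≤ ∑ j ∈ Finset.range n, η j := by
    intro M
    induction M with
    | zero =>
      simp only [Nat.add_zero]
      have h1 : ((n : ℝ) - ∑ j ∈ Finset.range n, c j)
          = ∑ j ∈ Finset.range n, (1 - c j) := by
        rw [Finset.sum_sub_distrib, Finset.sum_const, Finset.card_range,
          nsmul_eq_mul, mul_one]
      rw [h1, Finset.sum_mul, ← Finset.sum_add_distrib]
      apply Finset.sum_le_sum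
      intro j hj
      have hjn : η n ≤ η j := hηa (Finset.mem_range.mp hj).le
      nlinarith [hc0 j, hc1 j, hη0 j]
    | succ M ih =>
      have hstep : ∑ j ∈ Finset.range (n + (M + 1)), c j * η j
          + ((n : ℝ) - ∑ j ∈ Finset.range (n + (M + 1)), c j) * η (n + (M + 1))
          ≤ ∑ j ∈ Finset.range (n + M), c j * η j
          + ((n : ℝ) - ∑ j ∈ Finset.range (n + M), c j) * η (n + M) := by
        have hrw : n + (M + 1) = (n + M) + 1 := by ring
        rw [hrw, Finset.sum_range_succ, Finset.sum_range_succ (f := c)]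
        have hmono : η ((n + M) + 1) ≤ η (n + M) := hηa (Nat.le_succ _)
        have hC : ∑ j ∈ Finset.range ((n + M) + 1), c j ≤ (n : ℝ) := hcn _
        rw [Finset.sum_range_succ (f := c)] at hC
        nlinarith [hc0 (n + M)]
      exact hstep.trans ih
  intro N
  rcases le_or_gt N n with hNn | hnN
  · calc ∑ j ∈ Finset.range N, c j * η j ≤ ∑ j ∈ Finset.range N, η j := by
          apply Finset.sum_le_sum
          intro j _
          nlinarith [hc1 j, hη0 j, hc0 j]
      _ ≤ ∑ j ∈ Finset.range n, η j := by
          apply Finset.sum_le_sum_of_subset_of_nonneg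
          · exact Finset.range_subset_range.mpr hNn
          · intro j _ _; exact hη0 j
  · obtain ⟨M, rfl⟩ : ∃ M, N = n + M := ⟨N - n, by omega⟩
    have := key M
    have hC : ∑ j ∈ Finset.range (n + M), c j ≤ (n : ℝ) := hcn _
    nlinarith [hη0 (n + M)]

theorem stmt16 (ξ η : ℕ → ℝ)
    (hξa : Antitone ξ) (hξ0 : ∀ n, 0 ≤ ξ n) (hξl : Tendsto ξ atTop (nhds 0))
    (hηa : Antitone η) (hη0 : ∀ n, 0 ≤ η n) (hηl : Tendsto η atTop (nhds 0))
    (P : ℕ → ℕ → ℝ)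
    (hP0 : ∀ i j, 0 ≤ P i j)
    (hProw : ∀ i n, ∑ j ∈ Finset.range n, P i j ≤ 1)
    (hPcol : ∀ j n, ∑ i ∈ Finset.range n, P i j ≤ 1)
    (hPη : ∀ i, ξ i = ∑' j : ℕ, P i j * η j) :
    ∀ n, ∑ j ∈ Finset.range n, ξ j ≤ ∑ j ∈ Finset.range n, η j := by
  intro n
  -- summability of each row times η
  have hsum : ∀ i, Summable (fun j => P i j * η j) := by
    intro i
    have hrow : Summable (P i) := summable_of_sum_range_le (hP0 i) (hProw i)
    apply Summable.of_nonneg_of_le (fun j => mul_nonneg (hP0 i j) (hη0 j))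
      (fun j => ?_) (hrow.mul_right (η 0))
    exact mul_le_mul_of_nonneg_left (hηa (Nat.zero_le j)) (hP0 i j)
  set c : ℕ → ℝ := fun j => ∑ i ∈ Finset.range n, P i j with hc
  have hsum2 : Summable (fun j => c j * η j) := by
    have : (fun j => c j * η j) = fun j => ∑ i ∈ Finset.range n, P i j * η j := by
      funext j; simp [hc, Finset.sum_mul]
    rw [this]
    exact summable_sum (fun i _ => hsum i)
  have hswap : ∑ i ∈ Finset.range n, ξ i = ∑' j, c j * η j := by
    have : ∑ i ∈ Finset.range n, ξ i
        = ∑ i ∈ Finset.range n, ∑' j, P i j * η j := by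
      apply Finset.sum_congr rfl
      intro i _; exact hPη i
    rw [this, ← Summable.tsum_finsetSum (fun i _ => hsum i)]
    apply tsum_congr
    intro j
    simp [hc, Finset.sum_mul]
  rw [hswap]
  apply Summable.tsum_le_of_sum_range_le hsum2
  · exact aux_sum_le η hηa hη0 c
      (fun j => Finset.sum_nonneg fun i _ => hP0 i j)
      (fun j => hPcol j n) n
      (fun N => by
        have : ∑ j ∈ Finset.range N, c j
            = ∑ i ∈ Finset.range n, ∑ j ∈ Finset.range N, P i j := by
          rw [Finset.sum_comm]
        rw [this]
        calc ∑ i ∈ Finset.range n, ∑ j ∈ Finset.range N, P i j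
            ≤ ∑ i ∈ Finset.range n, (1 : ℝ) :=
              Finset.sum_le_sum fun i _ => hProw i N
          _ = n := by simp)
end

section
/- If a nonincreasing nonnegative finite (length-N) sequence ξ is majorized by a nonincreasing nonnegative sequence η of length N (∑_{j=1}^n ξ_j ≤ ∑_{j=1}^n η_j for n < N, with equality at n = N is not assumed; only ξ ≺ η), then there exists a nonincreasing nonnegative length-N sequence ρ with ξ_j ≤ ρ_j for all j, ρ ≺ η, and ∑_{j=1}^N ρ_j = ∑_{j=1}^N η_j. -/
/-! Take `ρ j = max (ξ j) c`, where the water level `c` is chosen by the intermediate value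
theorem so that `∑ ρ = ∑ η`. Then `ρ` is nonincreasing, dominates `ξ`, and `ρ ≺ η` at every
index `n`: if `c ≤ η n`, descend from `n` replacing `ρ j` by `η j` as long as `ρ j = c`, until
reaching an index where `ρ = ξ` and the majorization `ξ ≺ η` applies; if `η n < c`, then
`η j < c ≤ ρ j` for every `j > n`, and the bound on the complementary tail gives the one on
the prefix. -/

open Finset

section Prefix

variable {ι M : Type*} [LinearOrder ι] [LocallyFiniteOrderBot ι]

theorem sum_le_sum_of_forall_sum_Iic_le [Fintype ι] [Nonempty ι] [AddCommMonoid M] [Preorder M]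
    {f g : ι → M} (h : ∀ n, ∑ j ∈ Iic n, f j ≤ ∑ j ∈ Iic n, g j) :
    ∑ j, f j ≤ ∑ j, g j := by
  obtain ⟨m, hm⟩ := Finite.exists_max (id : ι → ι)
  have hIic : Iic m = univ := eq_univ_of_forall fun j => mem_Iic.2 (hm j)
  simpa only [hIic] using h m

theorem sum_Iic_le_sum_Iic_of_sum_eq [Fintype ι] [AddCommMonoid M] [PartialOrder M]
    [IsOrderedCancelAddMonoid M] {f g : ι → M} (hsum : ∑ j, f j = ∑ j, g j) {n : ι}
    (htail : ∀ j, n < j → g j ≤ f j) :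
    ∑ j ∈ Iic n, f j ≤ ∑ j ∈ Iic n, g j := by
  classical
  have htail_sum : ∑ j ∈ (Iic n)ᶜ, g j ≤ ∑ j ∈ (Iic n)ᶜ, f j :=
    sum_le_sum fun j hj => htail j (not_le.1 (mem_Iic.not.1 (mem_compl.1 hj)))
  refine le_of_add_le_add_right (a := ∑ j ∈ (Iic n)ᶜ, g j) ?_
  calc ∑ j ∈ Iic n, f j + ∑ j ∈ (Iic n)ᶜ, g j
      ≤ ∑ j ∈ Iic n, f j + ∑ j ∈ (Iic n)ᶜ, f j := add_le_add_right htail_sum _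
    _ = ∑ j ∈ Iic n, g j + ∑ j ∈ (Iic n)ᶜ, g j := by rw [sum_add_sum_compl, sum_add_sum_compl, hsum]

theorem sum_Iic_max_le_sum_Iic [PredOrder ι] [WellFoundedLT ι] [AddCommMonoid M] [LinearOrder M]
    [IsOrderedAddMonoid M] {ξ η : ι → M} (hξ : Antitone ξ) (hη : Antitone η)
    (hmaj : ∀ n, ∑ j ∈ Iic n, ξ j ≤ ∑ j ∈ Iic n, η j) {c : M} (n : ι) (hc : c ≤ η n) :
    ∑ j ∈ Iic n, max (ξ j) c ≤ ∑ j ∈ Iic n, η j := by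
  classical
  induction n using WellFoundedLT.induction with
  | _ n ih =>
  by_cases hξn : c ≤ ξ n
  · calc ∑ j ∈ Iic n, max (ξ j) c = ∑ j ∈ Iic n, ξ j :=
          sum_congr rfl fun j hj => max_eq_left (hξn.trans (hξ (mem_Iic.1 hj)))
      _ ≤ ∑ j ∈ Iic n, η j := hmaj n
  have hIio : ∑ j ∈ Iio n, max (ξ j) c ≤ ∑ j ∈ Iio n, η j := by
    by_cases hn : IsMin n
    · simp [Iio_eq_empty.2 hn]
    · rw [← Iic_pred_eq_Iio_of_not_isMin hn]
      exact ih _ (Order.pred_lt_of_not_isMin hn) (hc.trans (hη (Order.pred_le n)))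
  rw [← Iio_insert, sum_insert notMem_Iio_self, sum_insert notMem_Iio_self,
    max_eq_right (not_le.1 hξn).le]
  exact add_le_add hc hIio

end Prefix

theorem exists_sum_max_eq {ι : Type*} [Fintype ι] [Nonempty ι] {ξ : ι → ℝ} (hξ0 : ∀ j, 0 ≤ ξ j)
    {s : ℝ} (hs : ∑ j, ξ j ≤ s) : ∃ c, ∑ j, max (ξ j) c = s := by
  have hs0 : 0 ≤ s := (sum_nonneg fun j _ => hξ0 j).trans hs
  have hcont : Continuous fun c => ∑ j, max (ξ j) c := by fun_prop
  have hlow : ∑ j, max (ξ j) 0 ≤ s := by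
    simpa only [fun j => max_eq_left (hξ0 j)] using hs
  have hhigh : s ≤ ∑ j, max (ξ j) s := by
    obtain ⟨i⟩ := ‹Nonempty ι›
    calc s ≤ max (ξ i) s := le_max_right _ _
      _ ≤ ∑ j, max (ξ j) s :=
          single_le_sum (fun j _ => (hξ0 j).trans (le_max_left _ _)) (mem_univ i)
  obtain ⟨c, -, hc⟩ := intermediate_value_Icc hs0 hcont.continuousOn ⟨hlow, hhigh⟩
  exact ⟨c, hc⟩

theorem stmt19_general (N : ℕ) (ξ η : Fin N → ℝ)
    (hξa : Antitone ξ) (hξ0 : ∀ j, 0 ≤ ξ j)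
    (hηa : Antitone η)
    (hmaj : ∀ n : Fin N, ∑ j ∈ Finset.Iic n, ξ j ≤ ∑ j ∈ Finset.Iic n, η j) :
    ∃ ρ : Fin N → ℝ, Antitone ρ ∧ (∀ j, 0 ≤ ρ j) ∧
      (∀ j, ξ j ≤ ρ j) ∧
      (∀ n : Fin N, ∑ j ∈ Finset.Iic n, ρ j ≤ ∑ j ∈ Finset.Iic n, η j) ∧
      (∑ j, ρ j) = (∑ j, η j) := by
  rcases isEmpty_or_nonempty (Fin N) with hN | hN
  · exact ⟨ξ, hξa, hξ0, fun _ => le_rfl, isEmptyElim, by simp⟩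
  obtain ⟨c, hc⟩ := exists_sum_max_eq hξ0 (sum_le_sum_of_forall_sum_Iic_le hmaj)
  refine ⟨fun j => max (ξ j) c, hξa.max antitone_const, fun j => (hξ0 j).trans (le_max_left _ _),
    fun j => le_max_left _ _, fun n => ?_, hc⟩
  rcases le_or_gt c (η n) with hcn | hcn
  · exact sum_Iic_max_le_sum_Iic hξa hηa hmaj n hcn
  · exact sum_Iic_le_sum_Iic_of_sum_eq hc fun j hj =>
      (hηa hj.le).trans (hcn.le.trans (le_max_right _ _))

theorem stmt19 (N : ℕ) (ξ η : Fin N → ℝ)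
    (hξa : Antitone ξ) (hξ0 : ∀ j, 0 ≤ ξ j)
    (hηa : Antitone η) (hη0 : ∀ j, 0 ≤ η j)
    (hmaj : ∀ n : Fin N, ∑ j ∈ Finset.Iic n, ξ j ≤ ∑ j ∈ Finset.Iic n, η j) :
    ∃ ρ : Fin N → ℝ, Antitone ρ ∧ (∀ j, 0 ≤ ρ j) ∧
      (∀ j, ξ j ≤ ρ j) ∧
      (∀ n : Fin N, ∑ j ∈ Finset.Iic n, ρ j ≤ ∑ j ∈ Finset.Iic n, η j) ∧
      (∑ j, ρ j) = (∑ j, η j) :=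
  stmt19_general N ξ η hξa hξ0 hηa hmaj
end
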